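/- arXiv:1901.05829 — 6 statements merged into one kernel-verified Lean document; each statement's English description precedes it below -/
import Mathlib

section
/- Let q be a positive integer and λ a partition. Then c^{(q)}_λ ≠ 0 if and only if 𝒲^{(q)}_{r(λ)} ≠ ∅. -/
open Finset

/-- A composition: a list of positive natural numbers. -/
def IsComposition (δ : List ℕ) : Prop := ∀ x ∈ δ, 0 < x

/-- `δ` is `q'`-cumulative: no partial sum of `δ` (including the total sum, so
that the empty composition is excluded) is divisible by `q`. -/
def QCum (q : ℕ) (δ : List ℕ) : Prop :=
  ¬ q ∣ δ.sum ∧ ∀ j, 1 ≤ j → j ≤ δ.length → ¬ q ∣ (δ.take j).sum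

/-- The partition `((q-1)^{r (q-1)}, …, 2^{r 2}, 1^{r 1})` as a multiset. -/
def muOf (q : ℕ) (r : ℕ → ℕ) : Multiset ℕ :=
  ∑ i ∈ Finset.Ico 1 q, Multiset.replicate (r i) i

/-- `𝒲^{(q)}_r`: the set of `q'`-cumulative compositions which rearrange to the
partition `((q-1)^{r (q-1)}, …, 2^{r 2}, 1^{r 1})`. -/
def W (q : ℕ) (r : ℕ → ℕ) : Set (List ℕ) :=
  {δ | (↑δ : Multiset ℕ) = muOf q r ∧ QCum q δ}

/-- `r_j(λ)`: the number of parts `i ≥ 1` of `λ` with `i ≡ j (mod q)`. -/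
def rres (q : ℕ) (lam : Multiset ℕ) (j : ℕ) : ℕ :=
  Multiset.card (lam.filter fun i => 1 ≤ i ∧ i % q = j)

/-- `c^{(q)}_λ`: the number of `q'`-cumulative compositions rearranging to `λ`. -/
noncomputable def cnum (q : ℕ) (lam : Multiset ℕ) : ℕ :=
  Nat.card {δ : List ℕ // (↑δ : Multiset ℕ) = lam ∧ QCum q δ}

/-- `‖r‖ = ∑_{i=1}^{q-1} i·r_i`. -/
def normk (q : ℕ) (r : ℕ → ℕ) : ℕ := ∑ i ∈ Finset.Ico 1 q, i * r i

/-- `|r|_q = (q-1) + ∑_{i=2}^{q-1} (q-i)·r_i`. -/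
def absq (q : ℕ) (r : ℕ → ℕ) : ℕ := (q - 1) + ∑ i ∈ Finset.Ico 2 q, (q - i) * r i

/-- `max r = max{r_1, …, r_{q-1}}`. -/
def maxr (q : ℕ) (r : ℕ → ℕ) : ℕ := (Finset.Ico 1 q).sup r

/-! Reducing every part modulo `q` and discarding the zero residues only deletes repetitions
from the sequence of partial sums modulo `q`, so it turns a `q'`-cumulative rearrangement of `λ`
into an element of `𝒲_{r(λ)}`. Conversely, lift each residue of an element of `𝒲_{r(λ)}` to a
part of `λ` with that residue and append the parts divisible by `q` at the end: the partial sums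
keep their residues, and those running into the appended tail all equal the total sum modulo `q`. -/

theorem List.exists_le_take_filter_eq {α : Type*} (p : α → Bool) (l : List α) (j : ℕ) :
    ∃ j' ≥ j, (l.take j').filter p = (l.filter p).take j := by
  induction l generalizing j with
  | nil => exact ⟨j, le_rfl, by simp⟩
  | cons a t ih =>
    by_cases hp : p a
    · cases j with
      | zero => exact ⟨0, le_rfl, by simp⟩
      | succ k =>
        obtain ⟨j', hj', h⟩ := ih k
        exact ⟨j' + 1, by omega, by simp [hp, h]⟩
    · obtain ⟨j', hj', h⟩ := ih j
      exact ⟨j' + 1, by omega, by simp [hp, h]⟩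

theorem Multiset.finite_setOf_coe_eq {α : Type*} (s : Multiset α) :
    {l : List α | (l : Multiset α) = s}.Finite :=
  s.lists.finite_toSet.subset fun l hl => (Multiset.mem_lists_iff s l).2 hl.symm

theorem List.dvd_sum_filter_iff {p : ℕ → Bool} {q : ℕ} {l : List ℕ}
    (h : ∀ x ∈ l, p x = false → q ∣ x) : q ∣ (l.filter p).sum ↔ q ∣ l.sum := by
  have hsplit := congrArg Multiset.sum (Multiset.filter_add_not (fun x => p x) (l : Multiset ℕ))
  rw [Multiset.sum_add] at hsplit
  rw [← Multiset.sum_coe l, ← hsplit, Nat.dvd_add_left]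
  · simp [Multiset.filter_coe]
  · exact Multiset.dvd_sum fun x hx => by
      simp only [Multiset.mem_filter, Multiset.mem_coe] at hx
      exact h x hx.1 (by simpa using hx.2)

theorem qCum_iff_forall_take (q : ℕ) (δ : List ℕ) :
    QCum q δ ↔ ∀ j, 0 < j → ¬ q ∣ (δ.take j).sum := by
  refine ⟨fun ⟨hsum, htake⟩ j hj => ?_, fun h => ⟨?_, fun j hj _ => h j hj⟩⟩
  · rcases le_or_gt j δ.length with hjl | hjl
    · exact htake j hj hjl
    · rwa [List.take_of_length_le hjl.le]
  · simpa [List.take_of_length_le] using h (δ.length + 1) (Nat.succ_pos _)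

theorem qCum_map_mod_iff (q : ℕ) (δ : List ℕ) : QCum q (δ.map (· % q)) ↔ QCum q δ := by
  simp only [qCum_iff_forall_take, ← List.map_take, Nat.dvd_iff_mod_eq_zero, ← List.sum_nat_mod]

theorem QCum.filter {q : ℕ} {δ : List ℕ} (hδ : QCum q δ) {p : ℕ → Bool}
    (hp : ∀ x ∈ δ, p x = false → q ∣ x) : QCum q (δ.filter p) := by
  rw [qCum_iff_forall_take] at hδ ⊢
  intro j hj
  obtain ⟨j', hjj', htake⟩ := δ.exists_le_take_filter_eq p j
  rw [← htake, List.dvd_sum_filter_iff fun x hx => hp x (List.mem_of_mem_take hx)]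
  exact hδ j' (by omega)

theorem QCum.append {q : ℕ} {δ : List ℕ} (hδ : QCum q δ) {τ : List ℕ} (hτ : ∀ x ∈ τ, q ∣ x) :
    QCum q (δ ++ τ) := by
  rw [qCum_iff_forall_take] at hδ ⊢
  intro j hj
  have hτ' : q ∣ (τ.take (j - δ.length)).sum :=
    List.dvd_sum fun x hx => hτ x (List.mem_of_mem_take hx)
  rw [List.take_append, List.sum_append, Nat.dvd_add_left hτ']
  exact hδ j hj

theorem muOf_rres {q : ℕ} (hq : 0 < q) (lam : Multiset ℕ) :
    muOf q (rres q lam) = (lam.map (· % q)).filter (· ≠ 0) := by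
  ext n
  simp only [muOf, Multiset.count_sum', Multiset.count_replicate, Finset.sum_ite_eq',
    Multiset.count_filter]
  by_cases hn : n ∈ Finset.Ico 1 q
  · have hn0 : n ≠ 0 := by simp only [Finset.mem_Ico] at hn; omega
    rw [if_pos hn, if_pos hn0, rres, Multiset.count_map]
    congr 1
    refine Multiset.filter_congr fun x _ => ⟨fun h => h.2.symm, fun h => ⟨?_, h.symm⟩⟩
    exact Nat.pos_of_ne_zero fun hx => hn0 (by rw [h, hx, Nat.zero_mod])
  · rw [if_neg hn]
    split_ifs with hn0
    · refine (Multiset.count_eq_zero.2 ?_).symm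
      simp only [Multiset.mem_map, not_exists, not_and]
      intro x _ hx
      exact hn (by simp only [Finset.mem_Ico]; have := Nat.mod_lt x hq; omega)
    · rfl

theorem exists_qCum_coe_eq_of_qCum_residues {q : ℕ} {lam : Multiset ℕ} {δ : List ℕ}
    (hδ : (δ : Multiset ℕ) = (lam.map (· % q)).filter (· ≠ 0)) (hQ : QCum q δ) :
    ∃ γ : List ℕ, (γ : Multiset ℕ) = lam ∧ QCum q γ := by
  rw [Multiset.filter_map, ← Multiset.coe_toList (lam.filter _), Multiset.map_coe,
    Multiset.coe_eq_coe] at hδ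
  obtain ⟨γ, rfl, hγ⟩ := (congrFun (congrFun (List.eq_map_comp_perm (· % q)) δ) _).mpr hδ
  refine ⟨γ ++ (lam.filter fun x => ¬ x % q ≠ 0).toList, ?_,
    ((qCum_map_mod_iff q γ).1 hQ).append fun x hx => ?_⟩
  · rw [← Multiset.coe_add, Multiset.coe_toList, Multiset.coe_eq_coe.2 hγ, Multiset.coe_toList]
    exact Multiset.filter_add_not _ lam
  · simp only [Multiset.mem_toList, Multiset.mem_filter, not_not] at hx
    exact Nat.dvd_of_mod_eq_zero hx.2

theorem stmt1_general (q : ℕ) (hq : 0 < q) (lam : Multiset ℕ) :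
    cnum q lam ≠ 0 ↔ (W q (rres q lam)).Nonempty := by
  have hfin : Finite {δ : List ℕ // (↑δ : Multiset ℕ) = lam ∧ QCum q δ} :=
    ((Multiset.finite_setOf_coe_eq lam).subset fun _ h => h.1).to_subtype
  rw [cnum, Nat.card_ne_zero, and_iff_left hfin, nonempty_subtype]
  simp only [W, muOf_rres hq]
  constructor
  · rintro ⟨δ, rfl, hδ⟩
    refine ⟨(δ.map (· % q)).filter (· ≠ 0), by simp [Multiset.filter_coe], ?_⟩
    exact ((qCum_map_mod_iff q δ).2 hδ).filter fun x _ hx => by simp_all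
  · rintro ⟨δ, hδ, hQ⟩
    exact exists_qCum_coe_eq_of_qCum_residues hδ hQ

/-- Proposition 1 (nonvanishing): `c^{(q)}_λ ≠ 0` iff `𝒲^{(q)}_{r(λ)} ≠ ∅`. -/
theorem stmt1 (q : ℕ) (hq : 0 < q) (lam : Multiset ℕ) (hlam : ∀ x ∈ lam, 0 < x) :
    cnum q lam ≠ 0 ↔ (W q (rres q lam)).Nonempty :=
  stmt1_general q hq lam
end

section
/- Let λ be a partition having exactly one part of odd size (all remaining parts being of even size). Then c^{(2)}_λ = (ℓ(λ)−1)! / ∏_{s even} n_s(λ)!. -/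
open Finset

/-!
When `λ` has a single odd part `a`, a rearrangement of `λ` has all partial sums odd exactly when
it starts with `a`: the first partial sum is the first part, which must therefore be odd, and
every later part is even. So `c^{(2)}_λ` counts the rearrangements of the even parts of `λ`,
and a multiset `m` has `|m|! / ∏ₛ (count s m)!` rearrangements, which follows by induction
from `N(m) = ∑ₐ N(m - a)` (sorting by first letter).
-/

open Nat

namespace Multiset

variable {α : Type*} [DecidableEq α]

theorem prod_factorial_count_eq_count_mul {m : Multiset α} {a : α} (ha : a ∈ m) :
    ∏ s ∈ m.toFinset, (m.count s)! =
      m.count a * ∏ s ∈ (m.erase a).toFinset, ((m.erase a).count s)! := by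
  have hmem : a ∈ m.toFinset := mem_toFinset.mpr ha
  have hsub : (m.erase a).toFinset ⊆ m.toFinset :=
    toFinset_subset.mpr (subset_of_le (erase_le a m))
  rw [Finset.prod_subset hsub fun s _ hs => by
      rw [count_eq_zero.mpr (by simpa using hs), factorial_zero],
    ← Finset.mul_prod_erase _ _ hmem,
    ← Finset.mul_prod_erase _ (fun s => ((m.erase a).count s)!) hmem, ← mul_assoc,
    count_erase_self, mul_factorial_pred (count_ne_zero.mpr ha)]
  exact congrArg _ <| Finset.prod_congr rfl fun s hs => by
    rw [count_erase_of_ne (Finset.ne_of_mem_erase hs)]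

theorem toFinset_lists_eq_biUnion {m : Multiset α} (hm : m ≠ 0) :
    m.lists.toFinset = m.toFinset.biUnion fun a =>
      (m.erase a).lists.toFinset.map ⟨List.cons a, List.cons_injective⟩ := by
  ext l
  simp only [mem_toFinset, mem_lists_iff, Finset.mem_biUnion, Finset.mem_map,
    Function.Embedding.coeFn_mk, quot_mk_to_coe]
  constructor
  · rintro rfl
    obtain ⟨a, t, rfl⟩ := List.exists_cons_of_ne_nil (mt (coe_eq_zero l).mpr hm)
    exact ⟨a, mem_cons_self a t, t, by simp, rfl⟩
  · rintro ⟨a, ha, t, ht, rfl⟩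
    rw [← cons_coe, ← ht, cons_erase ha]

theorem card_toFinset_lists_mul_prod_factorial_count (m : Multiset α) :
    #m.lists.toFinset * ∏ a ∈ m.toFinset, (m.count a)! = (card m)! := by
  induction m using strongInductionOn with
  | ih m IH =>
  rcases eq_or_ne m 0 with rfl | hm
  · rw [← coe_nil, lists_coe, List.permutations_nil]
    simp
  have hstep : ∀ a ∈ m.toFinset, #(m.erase a).lists.toFinset * ∏ s ∈ m.toFinset, (m.count s)! =
      m.count a * (card m - 1)! := fun a ha => by
    have ha' := mem_toFinset.mp ha
    rw [prod_factorial_count_eq_count_mul ha', mul_left_comm, IH _ (erase_lt.mpr ha'),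
      card_erase_of_mem ha', pred_eq_sub_one]
  rw [toFinset_lists_eq_biUnion hm, card_biUnion, Finset.sum_mul]
  · simp only [Finset.card_map]
    rw [Finset.sum_congr rfl hstep, ← Finset.sum_mul, toFinset_sum_count_eq,
      mul_factorial_pred (card_pos.mpr hm).ne']
  · intro a _ b _ hab
    simp only [Function.onFun, Finset.disjoint_left, Finset.mem_map]
    rintro _ ⟨t, -, rfl⟩ ⟨t', -, h⟩
    exact hab (List.cons_eq_cons.mp h).1.symm

theorem natCard_list_coe_eq (m : Multiset α) :
    Nat.card {l : List α // (l : Multiset α) = m} = (card m)! / ∏ a ∈ m.toFinset, (m.count a)! := by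
  rw [Nat.card_congr (Equiv.subtypeEquivRight (q := (· ∈ m.lists.toFinset)) fun l => by
      rw [mem_toFinset, mem_lists_iff, quot_mk_to_coe, eq_comm]),
    Nat.card_eq_finsetCard, ← card_toFinset_lists_mul_prod_factorial_count,
    Nat.mul_div_cancel _ (prod_factorial_pos _ _)]

end Multiset

theorem QCum.exists_eq_cons {q : ℕ} {δ : List ℕ} (h : QCum q δ) :
    ∃ a t, δ = a :: t ∧ ¬ q ∣ a := by
  cases δ with
  | nil => exact absurd (dvd_zero q) h.1
  | cons a t => exact ⟨a, t, rfl, by simpa using h.2 1 le_rfl (by simp)⟩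

theorem qcum_two_cons {a : ℕ} {t : List ℕ} (ha : a % 2 = 1) (ht : ∀ x ∈ t, x % 2 = 0) :
    QCum 2 (a :: t) := by
  have hodd : ∀ s : List ℕ, s.Sublist t → ¬ 2 ∣ (a :: s).sum := fun s hs => by
    have heven : 2 ∣ s.sum := List.dvd_sum fun x hx => Nat.dvd_of_mod_eq_zero (ht x (hs.subset hx))
    rw [List.sum_cons]
    omega
  refine ⟨hodd t (List.Sublist.refl t), fun j hj _ => ?_⟩
  obtain ⟨k, rfl⟩ := Nat.exists_eq_add_of_le' hj
  exact hodd _ (List.take_sublist k t)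

theorem coe_eq_cons_and_qcum_two_iff {a : ℕ} {E : Multiset ℕ} (ha : a % 2 = 1)
    (hE : ∀ x ∈ E, x % 2 = 0) {δ : List ℕ} :
    ((δ : Multiset ℕ) = a ::ₘ E ∧ QCum 2 δ) ↔ ∃ t : List ℕ, (t : Multiset ℕ) = E ∧ a :: t = δ := by
  constructor
  · rintro ⟨hδ, hQ⟩
    obtain ⟨b, t, rfl, hb⟩ := hQ.exists_eq_cons
    have hba : b = a := by
      have hmem : b ∈ a ::ₘ E := by rw [← hδ]; simp
      rcases Multiset.mem_cons.mp hmem with h | h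
      · exact h
      · exact absurd (Nat.dvd_of_mod_eq_zero (hE b h)) hb
    subst hba
    exact ⟨t, Multiset.cons_inj_right b |>.mp hδ, rfl⟩
  · rintro ⟨t, rfl, rfl⟩
    exact ⟨rfl, qcum_two_cons ha fun x hx => hE x (Multiset.mem_coe.mpr hx)⟩

theorem cnum_two_cons {a : ℕ} {E : Multiset ℕ} (ha : a % 2 = 1) (hE : ∀ x ∈ E, x % 2 = 0) :
    cnum 2 (a ::ₘ E) = Nat.card {t : List ℕ // (t : Multiset ℕ) = E} := by
  refine (Nat.card_congr (Equiv.ofBijective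
    (fun t => ⟨a :: t.1, (coe_eq_cons_and_qcum_two_iff ha hE).mpr ⟨t.1, t.2, rfl⟩⟩)
    ⟨fun t t' h => Subtype.ext (List.cons_injective (congrArg Subtype.val h)), fun δ => ?_⟩)).symm
  obtain ⟨t, ht, hδ⟩ := (coe_eq_cons_and_qcum_two_iff ha hE).mp δ.2
  exact ⟨⟨t, ht⟩, Subtype.ext hδ⟩

theorem exists_odd_cons_filter_even {lam : Multiset ℕ}
    (h : Multiset.card (lam.filter fun i => i % 2 = 1) = 1) :
    ∃ a, a % 2 = 1 ∧ a ::ₘ lam.filter (fun i => i % 2 = 0) = lam := by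
  obtain ⟨a, ha⟩ := Multiset.card_eq_one.mp h
  have hmem : a ∈ lam.filter fun i => i % 2 = 1 := by rw [ha]; exact Multiset.mem_singleton_self a
  refine ⟨a, (Multiset.mem_filter.mp hmem).2, ?_⟩
  rw [← Multiset.singleton_add, ← ha]
  conv_rhs => rw [← Multiset.filter_add_not (fun i => i % 2 = 1) lam]
  exact congrArg _ (Multiset.filter_congr fun x _ => by omega)

theorem stmt5_general (lam : Multiset ℕ)
    (h : Multiset.card (lam.filter fun i => i % 2 = 1) = 1) :
    cnum 2 lam =
      Nat.factorial (Multiset.card lam - 1) /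
        ∏ s ∈ lam.toFinset.filter (fun s => s % 2 = 0), Nat.factorial (lam.count s) := by
  obtain ⟨a, ha, hlam⟩ := exists_odd_cons_filter_even h
  set E := lam.filter (fun i => i % 2 = 0) with hE
  have hprod : ∏ s ∈ lam.toFinset.filter (fun s => s % 2 = 0), (lam.count s)! =
      ∏ s ∈ E.toFinset, (E.count s)! := by
    rw [hE, Multiset.toFinset_filter]
    exact Finset.prod_congr rfl fun s hs => by
      rw [Multiset.count_filter_of_pos (p := fun i => i % 2 = 0) (Finset.mem_filter.mp hs).2]
  rw [hprod, ← hlam, cnum_two_cons ha fun x hx => (Multiset.mem_filter.mp hx).2,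
    Multiset.natCard_list_coe_eq, Multiset.card_cons, Nat.add_sub_cancel]

/-- If `λ` has exactly one odd part then
`c^{(2)}_λ = (ℓ(λ)-1)! / ∏_{s even} n_s(λ)!`. -/
theorem stmt5 (lam : Multiset ℕ) (hlam : ∀ x ∈ lam, 0 < x)
    (h : Multiset.card (lam.filter fun i => i % 2 = 1) = 1) :
    cnum 2 lam =
      Nat.factorial (Multiset.card lam - 1) /
        ∏ s ∈ lam.toFinset.filter (fun s => s % 2 = 0), Nat.factorial (lam.count s) :=
  stmt5_general lam h
end

section
/- Let q be a positive integer, r = (r₁,…,r_{q−1}) ∈ ℕ₀^{q−1}, and suppose r₁ = max r. Then 𝒲^{(q)}_r ≠ ∅ if and only if (i) q ∤ ‖r‖ and (ii) max r ≤ |r|_q. -/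
open Finset

/-!
Necessity: a partial sum can pass a multiple of `q` without hitting it only by a step of size
at least `2`, so a `q'`-cumulative composition of `N` with `m` parts `≥ 2` has `N < q (m + 1)`.
Since `|r|_q + ‖r‖ = q - 1 + r₁ + q m`, this is condition (ii) once `r₁ = max r`.

Sufficiency is an induction on the multiset of parts, choosing the last part. With
`ρ = N mod q`, remove a part `x ≥ 2`, `x ≠ ρ`, if the bound survives; otherwise remove a `1` if
`ρ ≠ 1` and the ones strictly outnumber every other value. If neither is possible, all parts
`≥ 2` equal `ρ`, they are as many as the ones, and the composition can end in `ρ, 1`.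
-/

lemma not_dvd_of_add_mod_ne {q a x : ℕ} (h : (a + x) % q ≠ x % q) : ¬ q ∣ a := by
  rintro ⟨k, rfl⟩
  exact h (by simp [Nat.add_mod])

lemma QCum.append_singleton {q x : ℕ} {l : List ℕ} (h : QCum q l) (hx : ¬ q ∣ l.sum + x) :
    QCum q (l ++ [x]) := by
  refine ⟨by simpa using hx, fun j hj1 hj2 => ?_⟩
  rw [List.length_append, List.length_singleton] at hj2
  rcases Nat.lt_or_ge j (l.length + 1) with hlt | hge
  · rw [List.take_append_of_le_length (by omega)]
    exact h.2 j hj1 (by omega)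
  · rw [List.take_of_length_le (by rw [List.length_append, List.length_singleton]; omega)]
    simpa using hx

lemma qCum_replicate_one {q c : ℕ} (hc : 0 < c) (hcq : c < q) : QCum q (List.replicate c 1) := by
  refine ⟨?_, fun j hj1 hj2 => ?_⟩
  · simpa using Nat.not_dvd_of_pos_of_lt hc hcq
  · rw [List.length_replicate] at hj2
    simpa [List.take_replicate, min_eq_left hj2] using
      Nat.not_dvd_of_pos_of_lt hj1 (by omega)

lemma sum_lt_of_take_sum_not_dvd {q : ℕ} (hq : 0 < q) {l : List ℕ} (hl : ∀ x ∈ l, x < q)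
    (hpre : ∀ j, 1 ≤ j → j ≤ l.length → ¬ q ∣ (l.take j).sum) :
    l.sum < q * (l.countP (2 ≤ ·) + 1) := by
  induction l using List.reverseRecOn with
  | nil => simpa
  | append_singleton l x ih =>
    have hx : x < q := hl x (by simp)
    have hlt := ih (fun y hy => hl y (by simp [hy])) fun j hj1 hj2 => by
      simpa [List.take_append_of_le_length hj2] using
        hpre j hj1 (by rw [List.length_append, List.length_singleton]; omega)
    have hlast : ¬ q ∣ l.sum + x := by
      simpa [List.take_of_length_le] using hpre (l.length + 1) (by omega) (by simp)
    rw [List.sum_append, List.countP_append, List.sum_singleton, List.countP_singleton]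
    split_ifs with h
    · simp only [decide_eq_true_eq] at h
      nlinarith
    · obtain rfl | rfl : x = 0 ∨ x = 1 := by simp only [decide_eq_true_eq] at h; omega
      · simpa
      · rw [add_zero]
        rw [Nat.lt_iff_add_one_le] at hlt ⊢
        exact lt_of_le_of_ne hlt fun h => hlast (h ▸ dvd_mul_right _ _)

lemma exists_qCum_cons {q a : ℕ} {t : Multiset ℕ} (hdvd : ¬ q ∣ (a ::ₘ t).sum)
    (ht : ∃ l : List ℕ, (l : Multiset ℕ) = t ∧ QCum q l) :
    ∃ l : List ℕ, (l : Multiset ℕ) = a ::ₘ t ∧ QCum q l := by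
  obtain ⟨l, rfl, hl⟩ := ht
  refine ⟨l ++ [a], Multiset.coe_eq_coe.2 (List.perm_append_singleton a l), ?_⟩
  exact hl.append_singleton (by simpa [add_comm] using hdvd)

lemma sum_add_count_le {q j : ℕ} {s : Multiset ℕ} (hs : ∀ x ∈ s, 0 < x ∧ x < q) (hj : j ≠ 1) :
    s.sum + s.count j ≤ s.count 1 + q * s.countP (2 ≤ ·) := by
  induction s using Multiset.induction_on with
  | empty => simp
  | cons a s ih =>
    have ha := hs a (Multiset.mem_cons_self a s)
    have ih := ih fun x hx => hs x (Multiset.mem_cons_of_mem hx)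
    rw [Multiset.sum_cons, Multiset.count_cons, Multiset.count_cons, Multiset.countP_cons]
    split_ifs <;> simp only [mul_add, mul_one, add_zero] <;> omega

/-- The conditions of the theorem for the multiset `s` of parts: `count_le_count_one` is
`r₁ = max r` and `sum_lt` is condition (ii) (see `le_absq_iff_normk_lt`). -/
structure Admissible (q : ℕ) (s : Multiset ℕ) : Prop where
  pos_lt : ∀ x ∈ s, 0 < x ∧ x < q
  count_le_count_one : ∀ i, s.count i ≤ s.count 1
  sum_lt : s.sum < q * (s.countP (2 ≤ ·) + 1)
  not_dvd_sum : ¬ q ∣ s.sum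

namespace Admissible

variable {q : ℕ} {s t : Multiset ℕ}

lemma two_le (h : Admissible q s) : 2 ≤ q := by
  obtain rfl | ⟨x, hx⟩ := s.empty_or_exists_mem
  · exact absurd (dvd_zero q) (by simpa using h.not_dvd_sum)
  · have := h.pos_lt x hx
    omega

lemma of_cons_of_two_le {x : ℕ} (h : Admissible q (x ::ₘ t)) (hx : 2 ≤ x)
    (hxN : x ≠ (x + t.sum) % q) (hlt : t.sum < q * (t.countP (2 ≤ ·) + 1)) :
    Admissible q t where
  pos_lt y hy := h.pos_lt y (Multiset.mem_cons_of_mem hy)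
  count_le_count_one i := by
    have := h.count_le_count_one i
    rw [Multiset.count_cons_of_ne (by omega : 1 ≠ x)] at this
    exact (Multiset.count_le_count_cons i x t).trans this
  sum_lt := hlt
  not_dvd_sum := not_dvd_of_add_mod_ne <| by
    rw [add_comm, Nat.mod_eq_of_lt (h.pos_lt x (Multiset.mem_cons_self x t)).2]
    exact hxN.symm

lemma of_cons_one (h : Admissible q (1 ::ₘ t)) (hN : (1 + t.sum) % q ≠ 1)
    (hlt : ∀ i ≠ 1, (1 ::ₘ t).count i < (1 ::ₘ t).count 1) : Admissible q t where
  pos_lt y hy := h.pos_lt y (Multiset.mem_cons_of_mem hy)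
  count_le_count_one i := by
    rcases eq_or_ne i 1 with rfl | hi
    · rfl
    · have := hlt i hi
      rw [Multiset.count_cons_self, Multiset.count_cons_of_ne hi] at this
      omega
  sum_lt := by
    have := h.sum_lt
    rw [Multiset.sum_cons, Multiset.countP_cons_of_neg _ (by omega)] at this
    omega
  not_dvd_sum := not_dvd_of_add_mod_ne <| by
    rwa [add_comm, Nat.mod_eq_of_lt h.two_le]

lemma of_cons_one_cons {ρ : ℕ} (h : Admissible q (1 ::ₘ ρ ::ₘ t)) (hρ : ρ = (1 + (ρ + t.sum)) % q)
    (hρ2 : 2 ≤ ρ) (ht : ∀ x ∈ t, x = 1 ∨ x = ρ)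
    (hle : 1 + (ρ + t.sum) ≤ q * (t.countP (2 ≤ ·) + 1)) : Admissible q t where
  pos_lt y hy := h.pos_lt y (Multiset.mem_cons_of_mem (Multiset.mem_cons_of_mem hy))
  count_le_count_one i := by
    have := h.count_le_count_one i
    rw [Multiset.count_cons_self, Multiset.count_cons_of_ne (by omega : 1 ≠ ρ)] at this
    rcases eq_or_ne i 1 with rfl | hi1
    · rfl
    rcases eq_or_ne i ρ with rfl | hiρ
    · rw [Multiset.count_cons_of_ne hi1, Multiset.count_cons_self] at this
      omega
    · rw [Multiset.count_eq_zero_of_notMem fun hi => (ht i hi).elim hi1 hiρ]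
      exact Nat.zero_le _
  sum_lt := by omega
  not_dvd_sum := not_dvd_of_add_mod_ne (x := ρ + 1) <| by
    rw [show t.sum + (ρ + 1) = 1 + (ρ + t.sum) by ring, ← hρ]
    have hρq := (h.pos_lt ρ (by simp)).2
    rcases Nat.lt_or_ge (ρ + 1) q with hlt | hge
    · rw [Nat.mod_eq_of_lt hlt]; omega
    · rw [show ρ + 1 = q by omega, Nat.mod_self]; omega

lemma exists_eq_one_cons_cons {ρ : ℕ} (h : Admissible q s) (hρ : s.sum % q = ρ) (hρ2 : 2 ≤ ρ)
    (hρs : ρ ∈ s) (hbig : ∀ x ∈ s, 2 ≤ x → x = ρ) (hle : s.sum ≤ q * s.countP (2 ≤ ·)) :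
    ∃ t, s = 1 ::ₘ ρ ::ₘ t ∧ ¬ q ∣ (ρ ::ₘ t).sum ∧ Admissible q t := by
  obtain ⟨t₁, rfl⟩ := Multiset.exists_cons_of_mem <| Multiset.one_le_count_iff_mem.1 <|
    (Multiset.one_le_count_iff_mem.2 hρs).trans (h.count_le_count_one ρ)
  obtain ⟨t, rfl⟩ := Multiset.exists_cons_of_mem <|
    (Multiset.mem_cons.1 hρs).resolve_left (by omega)
  simp only [Multiset.sum_cons] at hρ hle
  simp only [Multiset.countP_cons, if_neg (by omega : ¬ 2 ≤ 1), if_pos hρ2, add_zero] at hle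
  refine ⟨t, rfl, not_dvd_of_add_mod_ne (x := 1) ?_,
    h.of_cons_one_cons hρ.symm hρ2 (fun x hx => ?_) hle⟩
  · rw [Multiset.sum_cons, add_comm, hρ, Nat.mod_eq_of_lt h.two_le]
    omega
  · have hx' : x ∈ 1 ::ₘ ρ ::ₘ t := by simp [hx]
    by_cases hx2 : 2 ≤ x
    · exact Or.inr (hbig x hx' hx2)
    · exact Or.inl (by have := (h.pos_lt x hx').1; omega)

lemma exists_cons (h : Admissible q s) (hbig : ∃ b ∈ s, 2 ≤ b) :
    (∃ a t, s = a ::ₘ t ∧ Admissible q t) ∨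
      ∃ a b t, s = a ::ₘ b ::ₘ t ∧ ¬ q ∣ (b ::ₘ t).sum ∧ Admissible q t := by
  obtain ⟨N, hN⟩ : ∃ N, s.sum = N := ⟨_, rfl⟩
  obtain ⟨ρ, hρ⟩ : ∃ ρ, N % q = ρ := ⟨_, rfl⟩
  obtain ⟨m, hm⟩ : ∃ m, s.countP (2 ≤ ·) = m := ⟨_, rfl⟩
  have hNlt : N < q * m + q := by have := h.sum_lt; rw [hN, hm] at this; linarith
  by_cases hdrop : ∃ x ∈ s, 2 ≤ x ∧ x ≠ ρ ∧ N < q * m + x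
  · obtain ⟨x, hx, hx2, hxρ, hlt⟩ := hdrop
    obtain ⟨t, rfl⟩ := Multiset.exists_cons_of_mem hx
    rw [Multiset.sum_cons] at hN
    rw [Multiset.countP_cons_of_pos _ hx2] at hm
    exact Or.inl ⟨x, t, rfl, h.of_cons_of_two_le hx2 (by rwa [hN, hρ]) (by subst hm; linarith)⟩
  push Not at hdrop
  obtain ⟨b, hb, hb2⟩ := hbig
  have hρ1 : ρ ≠ 1 := by
    rintro rfl
    have hbN := hdrop b hb hb2 (by omega)
    have hmod := Nat.sub_mul_mod (by omega : q * m ≤ N)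
    rw [hρ, Nat.mod_eq_of_lt (by omega)] at hmod
    omega
  by_cases hstrict : ∀ i ≠ 1, s.count i < s.count 1
  · obtain ⟨t, rfl⟩ := Multiset.exists_cons_of_mem <|
      Multiset.count_pos.1 ((Nat.zero_le _).trans_lt (hstrict 0 zero_ne_one))
    rw [Multiset.sum_cons] at hN
    exact Or.inl ⟨1, t, rfl, h.of_cons_one (by rwa [hN, hρ]) hstrict⟩
  push Not at hstrict
  obtain ⟨j, hj1, hj⟩ := hstrict
  have hNle : N ≤ q * m := by
    have := sum_add_count_le h.pos_lt hj1
    rw [hN, hm] at this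
    omega
  have hbig_eq : ∀ x ∈ s, 2 ≤ x → x = ρ := fun x hx hx2 => by
    by_contra hne
    have := hdrop x hx hx2 hne
    omega
  have hbρ := hbig_eq b hb hb2
  exact Or.inr ⟨1, ρ, h.exists_eq_one_cons_cons (hN ▸ hρ) (hbρ ▸ hb2) (hbρ ▸ hb) hbig_eq
    (hN ▸ hm ▸ hNle)⟩

theorem exists_qCum (h : Admissible q s) : ∃ l : List ℕ, (l : Multiset ℕ) = s ∧ QCum q l := by
  induction s using Multiset.strongInductionOn with
  | ih s IH =>
  by_cases hbig : ∃ b ∈ s, 2 ≤ b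
  · rcases h.exists_cons hbig with ⟨a, t, rfl, ht⟩ | ⟨a, b, t, rfl, hbt, ht⟩
    · exact exists_qCum_cons h.not_dvd_sum (IH t (Multiset.lt_cons_self t a) ht)
    · exact exists_qCum_cons h.not_dvd_sum <| exists_qCum_cons hbt <|
        IH t ((Multiset.lt_cons_self t b).trans (Multiset.lt_cons_self _ a)) ht
  push Not at hbig
  obtain ⟨c, rfl⟩ : ∃ c, s = Multiset.replicate c 1 :=
    ⟨_, Multiset.eq_replicate_of_mem fun x hx => by
      have := (h.pos_lt x hx).1
      have := hbig x hx
      omega⟩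
  have hlt := h.sum_lt
  have hdvd := h.not_dvd_sum
  simp only [← Multiset.coe_replicate, Multiset.sum_coe, List.sum_replicate, smul_eq_mul, mul_one,
    Multiset.coe_countP, List.countP_replicate, Nat.not_ofNat_le_one, decide_false,
    Bool.false_eq_true, ↓reduceIte, zero_add] at hlt hdvd
  exact ⟨List.replicate c 1, Multiset.coe_replicate c 1,
    qCum_replicate_one (Nat.pos_of_ne_zero fun h0 => hdvd (h0 ▸ dvd_zero q)) hlt⟩

end Admissible

theorem exists_qCum_iff {q : ℕ} {s : Multiset ℕ} (hs : ∀ x ∈ s, 0 < x ∧ x < q)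
    (hcount : ∀ i, s.count i ≤ s.count 1) :
    (∃ l : List ℕ, (l : Multiset ℕ) = s ∧ QCum q l) ↔
      s.sum < q * (s.countP (2 ≤ ·) + 1) ∧ ¬ q ∣ s.sum := by
  constructor
  · rintro ⟨l, rfl, hl⟩
    obtain ⟨x, hx⟩ := l.exists_mem_of_ne_nil (by rintro rfl; exact hl.1 (dvd_zero q))
    have hlt := sum_lt_of_take_sum_not_dvd ((hs x hx).1.trans (hs x hx).2)
      (fun y hy => (hs y hy).2) hl.2
    rw [Multiset.sum_coe, Multiset.coe_countP]
    exact ⟨hlt, hl.1⟩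
  · rintro ⟨hlt, hdvd⟩
    exact Admissible.exists_qCum ⟨hs, hcount, hlt, hdvd⟩

section muOf

variable {q : ℕ} {r : ℕ → ℕ}

lemma pos_lt_of_mem_muOf {x : ℕ} (hx : x ∈ muOf q r) : 0 < x ∧ x < q := by
  obtain ⟨i, hi, hxi⟩ := Multiset.mem_sum.1 hx
  rw [Multiset.eq_of_mem_replicate hxi]
  exact Finset.mem_Ico.1 hi

lemma sum_muOf : (muOf q r).sum = normk q r := by
  simp [muOf, normk, Multiset.sum_sum, mul_comm]

lemma count_muOf (i : ℕ) : (muOf q r).count i = if i ∈ Ico 1 q then r i else 0 := by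
  simp [muOf, Multiset.count_sum', Multiset.count_replicate]

lemma countP_two_le_muOf : (muOf q r).countP (2 ≤ ·) = ∑ i ∈ Ico 2 q, r i := by
  have hIco : (Ico 1 q).filter (2 ≤ ·) = Ico 2 q := by
    ext i
    simp only [Finset.mem_filter, Finset.mem_Ico]
    omega
  rw [muOf, ← Multiset.coe_countPAddMonoidHom, map_sum, ← hIco, Finset.sum_filter]
  refine Finset.sum_congr rfl fun i _ => ?_
  rw [Multiset.coe_countPAddMonoidHom, ← Multiset.coe_replicate, Multiset.coe_countP,
    List.countP_replicate]
  simp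

lemma count_muOf_le_count_one (hr : r 1 = maxr q r) (i : ℕ) :
    (muOf q r).count i ≤ (muOf q r).count 1 := by
  rw [count_muOf, count_muOf]
  split_ifs with hi h1
  · exact hr ▸ Finset.le_sup hi
  · simp only [Finset.mem_Ico] at hi h1
    omega
  all_goals exact Nat.zero_le _

lemma two_le_of_not_dvd_normk (h : ¬ q ∣ normk q r) : 2 ≤ q := by
  by_contra hq
  interval_cases q
  · exact h (by simp [normk])
  · exact h (one_dvd _)

lemma absq_add_normk (hq : 2 ≤ q) :
    absq q r + normk q r = q - 1 + r 1 + q * ∑ i ∈ Ico 2 q, r i := by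
  rw [absq, normk, Finset.sum_eq_sum_Ico_succ_bot (by omega : 1 < q), Finset.mul_sum]
  simp only [Nat.reduceAdd, one_mul]
  have : ∑ i ∈ Ico 2 q, (q - i) * r i + ∑ i ∈ Ico 2 q, i * r i = ∑ i ∈ Ico 2 q, q * r i := by
    rw [← Finset.sum_add_distrib]
    refine Finset.sum_congr rfl fun i hi => ?_
    rw [← add_mul, Nat.sub_add_cancel (Finset.mem_Ico.1 hi).2.le]
  omega

lemma le_absq_iff_normk_lt (hq : 2 ≤ q) :
    r 1 ≤ absq q r ↔ normk q r < q * (∑ i ∈ Ico 2 q, r i + 1) := by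
  have := absq_add_normk (r := r) hq
  rw [mul_add, mul_one]
  omega

end muOf

theorem stmt7_general (q : ℕ) (r : ℕ → ℕ) (hr : r 1 = maxr q r) :
    (W q r).Nonempty ↔ (¬ q ∣ normk q r ∧ maxr q r ≤ absq q r) := by
  have hW : (W q r).Nonempty ↔ ∃ l : List ℕ, (l : Multiset ℕ) = muOf q r ∧ QCum q l := Iff.rfl
  rw [hW, exists_qCum_iff (fun _ => pos_lt_of_mem_muOf) (count_muOf_le_count_one hr),
    sum_muOf, countP_two_le_muOf, and_comm, ← hr]
  exact and_congr_right fun hdvd => (le_absq_iff_normk_lt (two_le_of_not_dvd_normk hdvd)).symm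

/-- Lemma 1: if `r₁ = max r` then `𝒲^{(q)}_r ≠ ∅` iff `q ∤ ‖r‖` and
`max r ≤ |r|_q`. -/
theorem stmt7 (q : ℕ) (hq : 0 < q) (r : ℕ → ℕ) (hr : r 1 = maxr q r) :
    (W q r).Nonempty ↔ (¬ q ∣ normk q r ∧ maxr q r ≤ absq q r) :=
  stmt7_general q r hr
end

section
/- Let q be a positive integer, let a be multiplicatively invertible in ℤ/qℤ, and let r = (r₁,…,r_{q−1}) ∈ ℕ₀^{q−1}. Then |𝒲^{(q)}_r| = |𝒲^{(q)}_{ᵃr}|. -/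
open Finset

/-!
Multiplication by a unit `a` of `ℤ/qℤ` permutes the residues `1, …, q-1`, and a partial sum is
divisible by `q` exactly when its image under `x ↦ a x mod q` is. So applying `x ↦ a x mod q`
entrywise maps `𝒲^{(q)}_r` into `𝒲^{(q)}_{ᵃr}`, and multiplication by an inverse `b` of `a`
maps it back.
-/

def mulMod (q a i : ℕ) : ℕ := a * i % q

lemma mem_Ico_of_mem_muOf {q : ℕ} {r : ℕ → ℕ} {x : ℕ} (hx : x ∈ muOf q r) :
    x ∈ Ico 1 q := by
  obtain ⟨i, hi, hxi⟩ := Multiset.mem_sum.1 hx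
  rwa [Multiset.eq_of_mem_replicate hxi]

lemma W_eq_empty_of_le_one {q : ℕ} (hq : q ≤ 1) (r : ℕ → ℕ) : W q r = ∅ := by
  have hmu : muOf q r = 0 := Multiset.eq_zero_of_forall_notMem fun x hx => by
    have := mem_Ico.1 (mem_Ico_of_mem_muOf hx)
    omega
  refine Set.eq_empty_of_forall_notMem fun δ ⟨hδ, hsum, _⟩ => hsum ?_
  rw [(Multiset.coe_eq_zero δ).1 (hδ.trans hmu), List.sum_nil]
  exact dvd_zero q

section mulMod

variable {q a b : ℕ}

lemma mulMod_mem_Ico (ha : a.Coprime q) {i : ℕ} (hi : i ∈ Ico 1 q) : mulMod q a i ∈ Ico 1 q := by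
  obtain ⟨hi1, hiq⟩ := mem_Ico.1 hi
  refine mem_Ico.2 ⟨Nat.pos_of_ne_zero fun h0 => ?_, Nat.mod_lt _ (by omega)⟩
  have : q ∣ i := (ha.symm.dvd_mul_left).1 (Nat.dvd_of_mod_eq_zero h0)
  exact absurd (Nat.le_of_dvd hi1 this) (by omega)

lemma mulMod_mulMod (hab : a * b % q = 1 % q) {i : ℕ} (hi : i < q) :
    mulMod q b (mulMod q a i) = i := by
  calc b * (a * i % q) % q = a * b * i % q := by rw [Nat.mul_mod_mod, ← mul_assoc, mul_comm b]
    _ = i := by rw [Nat.mul_mod, hab, ← Nat.mul_mod, one_mul, Nat.mod_eq_of_lt hi]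

lemma sum_map_mulMod_modEq (l : List ℕ) : (l.map (mulMod q a)).sum ≡ a * l.sum [MOD q] := by
  induction l with
  | nil => rfl
  | cons x l ih =>
    rw [List.map_cons, List.sum_cons, List.sum_cons, mul_add]
    exact (Nat.mod_modEq (a * x) q).add ih

lemma dvd_sum_map_mulMod_iff (ha : a.Coprime q) (l : List ℕ) :
    q ∣ (l.map (mulMod q a)).sum ↔ q ∣ l.sum :=
  ((sum_map_mulMod_modEq l).dvd_iff dvd_rfl).trans ha.symm.dvd_mul_left

lemma qCum_map_mulMod_iff (ha : a.Coprime q) (δ : List ℕ) :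
    QCum q (δ.map (mulMod q a)) ↔ QCum q δ := by
  simp only [QCum, List.length_map, ← List.map_take, dvd_sum_map_mulMod_iff ha]

lemma map_mulMod_muOf (ha : a.Coprime q) (hab : a * b % q = 1 % q) {r r' : ℕ → ℕ}
    (hr' : ∀ i ∈ Ico 1 q, r' (mulMod q a i) = r i) :
    (muOf q r).map (mulMod q a) = muOf q r' := by
  have hba : b * a % q = 1 % q := by rwa [mul_comm]
  have hb : b.Coprime q := Nat.coprime_of_mul_modEq_one a hba
  simp only [muOf, ← Multiset.coe_mapAddMonoidHom, map_sum]
  simp only [Multiset.coe_mapAddMonoidHom, Multiset.map_replicate]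
  refine sum_bij' (fun i _ => mulMod q a i) (fun j _ => mulMod q b j)
    (fun i hi => mulMod_mem_Ico ha hi) (fun j hj => mulMod_mem_Ico hb hj)
    (fun i hi => mulMod_mulMod hab (mem_Ico.1 hi).2)
    (fun j hj => mulMod_mulMod hba (mem_Ico.1 hj).2) fun i hi => ?_
  rw [hr' i hi]

lemma map_mulMod_mem_W (ha : a.Coprime q) (hab : a * b % q = 1 % q) {r r' : ℕ → ℕ}
    (hr' : ∀ i ∈ Ico 1 q, r' (mulMod q a i) = r i) {δ : List ℕ} (hδ : δ ∈ W q r) :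
    δ.map (mulMod q a) ∈ W q r' :=
  ⟨by rw [← map_mulMod_muOf ha hab hr', ← hδ.1, Multiset.map_coe],
    (qCum_map_mulMod_iff ha δ).2 hδ.2⟩

lemma map_mulMod_map_mulMod_of_mem_W (hab : a * b % q = 1 % q) {r : ℕ → ℕ} {δ : List ℕ}
    (hδ : δ ∈ W q r) : (δ.map (mulMod q a)).map (mulMod q b) = δ := by
  rw [List.map_map]
  refine (List.map_congr_left fun x hx => ?_).trans (List.map_id δ)
  have hx : x ∈ muOf q r := by rw [← hδ.1]; exact hx
  exact mulMod_mulMod hab (mem_Ico.1 (mem_Ico_of_mem_muOf hx)).2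

end mulMod

theorem stmt10_general (q : ℕ) (a : ℕ) (ha : Nat.Coprime a q)
    (r r' : ℕ → ℕ)
    (hr' : ∀ i j, 1 ≤ i → i ≤ q - 1 → 1 ≤ j → j ≤ q - 1 →
      j % q = a * i % q → r' j = r i) :
    Nat.card ↥(W q r) = Nat.card ↥(W q r') := by
  rcases Nat.lt_or_ge 1 q with hq | hq
  · obtain ⟨b, -, hab⟩ := Nat.exists_mul_mod_eq_one_of_coprime ha hq
    replace hab : a * b % q = 1 % q := by rw [hab, Nat.mod_eq_of_lt hq]
    have hba : b * a % q = 1 % q := by rwa [mul_comm]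
    have hb : b.Coprime q := Nat.coprime_of_mul_modEq_one a hba
    have hr_a : ∀ i ∈ Ico 1 q, r' (mulMod q a i) = r i := fun i hi => by
      obtain ⟨hi1, hiq⟩ := mem_Ico.1 hi
      obtain ⟨hj1, hjq⟩ := mem_Ico.1 (mulMod_mem_Ico ha hi)
      exact hr' i (mulMod q a i) hi1 (by omega) hj1 (by omega) (Nat.mod_mod _ _)
    have hr_b : ∀ j ∈ Ico 1 q, r (mulMod q b j) = r' j := fun j hj => by
      rw [← hr_a _ (mulMod_mem_Ico hb hj), mulMod_mulMod hba (mem_Ico.1 hj).2]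
    have hinv : Set.InvOn (List.map (mulMod q b)) (List.map (mulMod q a)) (W q r) (W q r') :=
      ⟨fun _ => map_mulMod_map_mulMod_of_mem_W hab, fun _ => map_mulMod_map_mulMod_of_mem_W hba⟩
    exact Nat.card_congr (Set.BijOn.equiv _ (hinv.bijOn
      (fun _ => map_mulMod_mem_W ha hab hr_a) (fun _ => map_mulMod_mem_W hb hba hr_b)))
  · rw [W_eq_empty_of_le_one hq, W_eq_empty_of_le_one hq]

/-- Lemma 2: if `a` is invertible mod `q` and `r'` is the twist `ᵃr` of `r`
(i.e. `r'_j = r_i` whenever `1 ≤ i, j ≤ q-1` and `j ≡ a·i (mod q)`), then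
`|𝒲^{(q)}_r| = |𝒲^{(q)}_{ᵃr}|`. -/
theorem stmt10 (q : ℕ) (hq : 0 < q) (a : ℕ) (ha : Nat.Coprime a q)
    (r r' : ℕ → ℕ)
    (hr' : ∀ i j, 1 ≤ i → i ≤ q - 1 → 1 ≤ j → j ≤ q - 1 →
      j % q = a * i % q → r' j = r i) :
    Nat.card ↥(W q r) = Nat.card ↥(W q r') :=
  stmt10_general q a ha r r' hr'
end

section
/- Let p be a prime number, λ a partition, and r(λ) = (r₁,…,r_{p−1}). Then c^{(p)}_λ ≠ 0 if and only if (i) p ∤ |λ| and (ii) for some index a with r_a = max r(λ), one has max r(λ) ≤ |ᵇr(λ)|_p, where 1 ≤ b ≤ p−1 satisfies ab ≡ 1 (mod p). -/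
open Finset

/-! Reducing the parts mod `p` and dropping those divisible by `p` (they can be placed right
after the first part without changing any partial sum), the question becomes when a multiset `N`
of nonzero residues has an ordering with no vanishing partial sum.

Necessity: scale by `a⁻¹` and take representatives in `[1, p)`. The partial sums, read in `ℕ`,
never hit a multiple of `p`, so every multiple of `p` they pass is passed by a part `≥ 2`.
Counting gives `r_a ≤ |ᵇr|_p` for every `a`, and the total sum is nonzero.

Sufficiency, by induction: put last an element `x` of maximal multiplicity or, if `x` is the total
sum, any other element; either way the inequalities survive for the remaining parts. Checking
them at one `a` of maximal multiplicity suffices: the bound attached to any other residue `c`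
contains a term `(p - j) r_a` with `j < p`, so it is at least `r_a ≥ r_c`. -/

section Absq

variable {q : ℕ}

lemma absq_congr {r r' : ℕ → ℕ} (h : ∀ j ∈ Ico 2 q, r j = r' j) : absq q r = absq q r' := by
  rw [absq, absq, sum_congr rfl fun j hj => by rw [h j hj]]

lemma absq_eq_add_of_eq_add_ite {r r' : ℕ → ℕ} {e : ℕ} (he : e ∈ Ico 2 q)
    (h : ∀ j ∈ Ico 2 q, r j = r' j + if j = e then 1 else 0) :
    absq q r = absq q r' + (q - e) := by
  rw [absq, absq, sum_congr rfl fun j hj => congrArg ((q - j) * ·) (h j hj)]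
  simp only [mul_add, sum_add_distrib, mul_ite, mul_one, mul_zero, sum_ite_eq', if_pos he]
  ring

lemma sub_one_add_sum_le_absq (r : ℕ → ℕ) {S : Finset ℕ} (hS : S ⊆ Ico 2 q) :
    q - 1 + ∑ j ∈ S, (q - j) * r j ≤ absq q r :=
  Nat.add_le_add_left (sum_le_sum_of_subset hS) _

end Absq

section NatResidues

variable {p : ℕ} {w : Multiset ℕ}

lemma countP_two_le_eq_sum_count (hw : ∀ e ∈ w, e < p) :
    w.countP (2 ≤ ·) = ∑ j ∈ Ico 2 p, w.count j := by
  rw [Multiset.countP_eq_card_filter, ← Multiset.sum_count_eq_card (s := Ico 2 p)]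
  · exact sum_congr rfl fun j hj => Multiset.count_filter_of_pos (mem_Ico.mp hj).1
  · intro e he
    obtain ⟨he, h2⟩ := Multiset.mem_filter.mp he
    exact mem_Ico.mpr ⟨h2, hw e he⟩

lemma absq_count_add_sum (hw : ∀ e ∈ w, 0 < e ∧ e < p) :
    absq p w.count + w.sum = w.count 1 + (p - 1) + p * ∑ j ∈ Ico 2 p, w.count j := by
  have hsub : w.toFinset ⊆ insert 1 (Ico 2 p) := by
    intro e he
    have := hw e (Multiset.mem_toFinset.mp he)
    rw [mem_insert, mem_Ico]
    omega
  rw [Finset.sum_multiset_count_of_subset w _ hsub, sum_insert (by simp), absq, mul_sum]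
  simp only [smul_eq_mul, mul_one]
  have : ∀ j ∈ Ico 2 p, (p - j) * w.count j + w.count j * j = p * w.count j := by
    intro j hj
    rw [mul_comm _ j, ← add_mul, Nat.sub_add_cancel (mem_Ico.mp hj).2.le]
  rw [← sum_congr rfl this, sum_add_distrib]
  ring

lemma div_le_add_countP (v : List ℕ) (hv : ∀ e ∈ v, e < p) (s : ℕ)
    (hpre : ∀ j, 1 ≤ j → j ≤ v.length → ¬ p ∣ s + (v.take j).sum) :
    (s + v.sum) / p ≤ s / p + v.countP (2 ≤ ·) := by
  induction v generalizing s with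
  | nil => simp
  | cons e t ih =>
    have he : e < p := hv e (by simp)
    -- a step of size `1` cannot cross a multiple of `p` without landing on it
    have hstep : (s + e) / p ≤ s / p + if 2 ≤ e then 1 else 0 := by
      rcases (by omega : e = 0 ∨ e = 1 ∨ 2 ≤ e) with rfl | rfl | h2
      · simp
      · have := hpre 1 le_rfl (by simp)
        simp_all [Nat.succ_div]
      · rw [if_pos h2, ← Nat.add_div_right s (by omega)]
        exact Nat.div_le_div_right (by omega)
    have iht := ih (fun e' he' => hv e' (List.mem_cons_of_mem _ he')) (s + e) fun j h1 h2 => by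
      simpa [add_assoc] using hpre (j + 1) (by omega) (by simp; omega)
    simp only [List.sum_cons, List.countP_cons, ← add_assoc, decide_eq_true_eq] at iht ⊢
    omega

lemma count_one_le_absq_of_not_dvd_take (v : List ℕ) (hv : ∀ e ∈ v, 0 < e ∧ e < p)
    (hpre : ∀ j, 1 ≤ j → j ≤ v.length → ¬ p ∣ (v.take j).sum) :
    (v : Multiset ℕ).count 1 ≤ absq p (v : Multiset ℕ).count := by
  rcases Nat.eq_zero_or_pos p with rfl | hp
  · obtain rfl : v = [] := List.eq_nil_iff_forall_not_mem.mpr fun e he => by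
      have := hv e he; omega
    simp
  have hv' : ∀ e ∈ (v : Multiset ℕ), 0 < e ∧ e < p := fun e he => hv e (Multiset.mem_coe.mp he)
  have hdiv := div_le_add_countP v (fun e he => (hv e he).2) 0 (by simpa using hpre)
  rw [zero_add, Nat.zero_div, zero_add, ← Multiset.coe_countP,
    countP_two_le_eq_sum_count fun e he => (hv' e he).2, ← Multiset.sum_coe] at hdiv
  have hid := absq_count_add_sum hv'
  have hmul := Nat.mul_le_mul_left p hdiv
  have hmod := Nat.div_add_mod (v : Multiset ℕ).sum p
  have hlt := Nat.mod_lt (v : Multiset ℕ).sum hp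
  omega

lemma count_one_add_le_absq (hw : ∀ e ∈ w, 0 < e ∧ e < p) (hsum : w.sum % p = 1)
    (h : w.count 1 ≤ absq p w.count) : w.count 1 + (p - 2) ≤ absq p w.count := by
  have hid := absq_count_add_sum hw
  have hmod := Nat.div_add_mod w.sum p
  set C := ∑ j ∈ Ico 2 p, w.count j
  -- `absq - count 1 = p - 2 + p * (C - w.sum / p)` is nonnegative, hence at least `p - 2`
  have hlt : p * (w.sum / p) < p * (C + 1) := by rw [mul_add]; omega
  have hle := Nat.mul_le_mul_left p (Nat.lt_succ_iff.mp (Nat.lt_of_mul_lt_mul_left hlt))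
  omega

end NatResidues

namespace List

variable {M : Type*} [AddMonoid M]

/-- Holds vacuously for `l = []`. -/
def PartialSumsNeZero (l : List M) : Prop :=
  ∀ j, 1 ≤ j → j ≤ l.length → (l.take j).sum ≠ 0

namespace PartialSumsNeZero

variable {l t : List M} {x : M}

lemma sum_ne_zero (hl : l.PartialSumsNeZero) (hne : l ≠ []) : l.sum ≠ 0 := by
  simpa using hl l.length (length_pos_iff.mpr hne) le_rfl

lemma append_singleton (hl : l.PartialSumsNeZero) (hx : l.sum + x ≠ 0) :
    (l ++ [x]).PartialSumsNeZero := by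
  intro j hj1 hj2
  rw [length_append, length_singleton] at hj2
  rcases Nat.lt_or_ge l.length j with hj | hj
  · rw [take_of_length_le (by simp; omega), sum_append, sum_singleton]
    exact hx
  · rw [take_append_of_le_length hj]
    exact hl j hj1 hj

lemma cons_zero (h : (x :: t).PartialSumsNeZero) : (x :: 0 :: t).PartialSumsNeZero := by
  rintro (_ | _ | j) hj1 hj2
  · omega
  · simpa using h 1 le_rfl (by simp)
  · simpa using h (j + 1) (by omega) (by simpa using hj2)

lemma cons_replicate_zero_append (h : (x :: t).PartialSumsNeZero) (k : ℕ) :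
    (x :: (replicate k 0 ++ t)).PartialSumsNeZero := by
  induction k with
  | zero => simpa using h
  | succ k ih => simpa [replicate_succ] using ih.cons_zero

variable [DecidableEq M]

lemma exists_take_sum_eq_of_filter (l : List M) :
    ∀ j, 1 ≤ j → j ≤ (l.filter (· ≠ 0)).length →
      ∃ i, 1 ≤ i ∧ i ≤ l.length ∧ ((l.filter (· ≠ 0)).take j).sum = (l.take i).sum := by
  induction l with
  | nil =>
    intro j hj1 hj2
    simp at hj2
    omega
  | cons x t ih =>
    intro j hj1 hj2
    by_cases hx : x = 0
    · rw [filter_cons_of_neg (by simpa using hx)] at hj2 ⊢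
      obtain ⟨i, hi1, hi2, hs⟩ := ih j hj1 hj2
      exact ⟨i + 1, by omega, by simpa using hi2,
        by rw [take_succ_cons, sum_cons, hx, zero_add, hs]⟩
    · rw [filter_cons_of_pos (by simpa using hx)] at hj2 ⊢
      obtain ⟨j, rfl⟩ := Nat.exists_eq_add_of_le' hj1
      rcases Nat.eq_zero_or_pos j with rfl | hj
      · exact ⟨1, le_rfl, by simp, by simp⟩
      · obtain ⟨i, hi1, hi2, hs⟩ := ih j hj (by simpa using hj2)
        exact ⟨i + 1, by omega, by simpa using hi2, by rw [take_succ_cons, take_succ_cons, sum_cons,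
          sum_cons, hs]⟩

lemma filter_ne_zero (hl : l.PartialSumsNeZero) : (l.filter (· ≠ 0)).PartialSumsNeZero := by
  intro j hj1 hj2
  obtain ⟨i, hi1, hi2, hs⟩ := exists_take_sum_eq_of_filter l j hj1 hj2
  exact hs ▸ hl i hi1 hi2

end PartialSumsNeZero

end List

section Residues

variable {p : ℕ}

/-- `scaledCount N a` is the paper's `ᵇr` for `r_i = N.count i` and `ab ≡ 1`: its `j`-th entry is
`r_i` for `i ≡ a j`. -/
def scaledCount (N : Multiset (ZMod p)) (a : ZMod p) (j : ℕ) : ℕ := N.count (a * j)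

def Admissible_s12 (N : Multiset (ZMod p)) : Prop :=
  ∀ a ≠ 0, N.count a ≤ absq p (scaledCount N a)

def scaledVals (a : ZMod p) (N : Multiset (ZMod p)) : Multiset ℕ := N.map fun z => (a⁻¹ * z).val

variable [Fact p.Prime] {N : Multiset (ZMod p)} {a w : ZMod p}

lemma mul_natCast_eq_iff (ha : a ≠ 0) {j : ℕ} (hj : j < p) : a * j = w ↔ j = (a⁻¹ * w).val := by
  rw [← eq_inv_mul_iff_mul_eq₀ ha]
  constructor
  · rintro h
    rw [← h, ZMod.val_natCast_of_lt hj]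
  · rintro rfl
    rw [ZMod.natCast_zmod_val]

lemma val_inv_mul_mem_Ico (ha : a ≠ 0) (hw : w ≠ 0) (hwa : w ≠ a) : (a⁻¹ * w).val ∈ Ico 2 p := by
  have h0 : (a⁻¹ * w).val ≠ 0 := by simp [ZMod.val_eq_zero, ha, hw]
  have h1 : (a⁻¹ * w).val ≠ 1 := fun h => hwa <| by
    simpa using ((mul_natCast_eq_iff ha (Fact.out : p.Prime).one_lt).mpr h.symm).symm
  exact mem_Ico.mpr ⟨by omega, ZMod.val_lt _⟩

lemma scaledCount_val_inv_mul (ha : a ≠ 0) : scaledCount N a (a⁻¹ * w).val = N.count w := by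
  rw [scaledCount, ZMod.natCast_zmod_val, mul_inv_cancel_left₀ ha]

lemma absq_scaledCount_erase (ha : a ≠ 0) (hw : w ≠ 0) (hwa : w ≠ a) (hwN : w ∈ N) :
    absq p (scaledCount N a) = absq p (scaledCount (N.erase w) a) + (p - (a⁻¹ * w).val) := by
  refine absq_eq_add_of_eq_add_ite (val_inv_mul_mem_Ico ha hw hwa) fun j hj => ?_
  conv_lhs => rw [scaledCount, ← Multiset.cons_erase hwN, Multiset.count_cons]
  simp only [scaledCount, mul_natCast_eq_iff ha (mem_Ico.mp hj).2]

lemma mul_natCast_ne_self (ha : a ≠ 0) {j : ℕ} (hj : j ∈ Ico 2 p) : a * j ≠ a := by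
  have := (mem_Ico.mp hj).1
  rw [Ne, mul_natCast_eq_iff ha (mem_Ico.mp hj).2, inv_mul_cancel₀ ha, ZMod.val_one]
  omega

lemma absq_scaledCount_erase_self (ha : a ≠ 0) :
    absq p (scaledCount (N.erase a) a) = absq p (scaledCount N a) :=
  absq_congr fun _ hj => Multiset.count_erase_of_ne (mul_natCast_ne_self ha hj) N

lemma sub_one_add_mul_count_le_absq (ha : a ≠ 0) (hw : w ≠ 0) (hwa : w ≠ a) :
    p - 1 + (p - (a⁻¹ * w).val) * N.count w ≤ absq p (scaledCount N a) := by
  simpa [scaledCount_val_inv_mul ha] using sub_one_add_sum_le_absq (scaledCount N a)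
    (singleton_subset_iff.mpr (val_inv_mul_mem_Ico ha hw hwa))

lemma count_scaledVals (ha : a ≠ 0) {j : ℕ} (hj : j < p) :
    (scaledVals a N).count j = scaledCount N a j := by
  rw [scaledVals, Multiset.count_map, scaledCount, Multiset.count_eq_card_filter_eq]
  simp only [mul_natCast_eq_iff ha hj]

lemma count_one_scaledVals (ha : a ≠ 0) : (scaledVals a N).count 1 = N.count a := by
  rw [count_scaledVals ha (Fact.out : p.Prime).one_lt, scaledCount, Nat.cast_one, mul_one]

lemma absq_scaledVals (ha : a ≠ 0) : absq p (scaledVals a N).count = absq p (scaledCount N a) :=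
  absq_congr fun _ hj => count_scaledVals ha (mem_Ico.mp hj).2

lemma mem_scaledVals (ha : a ≠ 0) (h0 : 0 ∉ N) : ∀ e ∈ scaledVals a N, 0 < e ∧ e < p := by
  intro e he
  obtain ⟨z, hz, rfl⟩ := Multiset.mem_map.mp he
  have : z ≠ 0 := fun h => h0 (h ▸ hz)
  exact ⟨Nat.pos_of_ne_zero (by simp [ZMod.val_eq_zero, ha, this]), ZMod.val_lt _⟩

lemma natCast_sum_scaledVals (a : ZMod p) (N : Multiset (ZMod p)) :
    ((scaledVals a N).sum : ZMod p) = a⁻¹ * N.sum := by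
  simpa [scaledVals, Nat.cast_multiset_sum, Multiset.map_map] using
    Multiset.sum_map_mul_left (s := N) (f := id) (a := a⁻¹)

end Residues

section Admissible_s12

variable {p : ℕ} [Fact p.Prime] {N : Multiset (ZMod p)} {a x y : ZMod p}

lemma Admissible_s12.of_partialSumsNeZero {l : List (ZMod p)} (h0 : 0 ∉ l)
    (hl : l.PartialSumsNeZero) : Admissible_s12 (l : Multiset (ZMod p)) := by
  intro a ha
  have hv : (l.map fun z => (a⁻¹ * z).val : Multiset ℕ) = scaledVals a l := by
    simp [scaledVals]
  have hpre : ∀ j, 1 ≤ j → j ≤ (l.map fun z => (a⁻¹ * z).val).length →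
      ¬ p ∣ ((l.map fun z => (a⁻¹ * z).val).take j).sum := by
    intro j hj1 hj2
    rw [← ZMod.natCast_eq_zero_iff, ← List.map_take, ← Multiset.sum_coe, ← Multiset.map_coe,
      ← scaledVals, natCast_sum_scaledVals]
    exact mul_ne_zero (inv_ne_zero ha) (hl j hj1 (by simpa using hj2))
  have := count_one_le_absq_of_not_dvd_take _
    (fun e he => mem_scaledVals ha (by simpa using h0) e (hv ▸ Multiset.mem_coe.mpr he)) hpre
  rwa [hv, count_one_scaledVals ha, absq_scaledVals ha] at this

lemma count_add_le_absq_of_sum_eq (ha : a ≠ 0) (h0 : 0 ∉ N) (hsum : N.sum = a)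
    (h : N.count a ≤ absq p (scaledCount N a)) :
    N.count a + (p - 2) ≤ absq p (scaledCount N a) := by
  have hmod : (scaledVals a N).sum % p = 1 := by
    rw [← ZMod.val_natCast, natCast_sum_scaledVals, hsum, inv_mul_cancel₀ ha, ZMod.val_one]
  rw [← count_one_scaledVals ha, ← absq_scaledVals ha] at h ⊢
  exact count_one_add_le_absq (mem_scaledVals ha h0) hmod h

lemma admissible_of_count_le_of_forall_count_le (ha : a ≠ 0) (hmax : ∀ z, N.count z ≤ N.count a)
    (h : N.count a ≤ absq p (scaledCount N a)) : Admissible_s12 N := by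
  intro b hb
  rcases eq_or_ne a b with rfl | hab
  · exact h
  have hbound := sub_one_add_mul_count_le_absq (N := N) hb ha hab
  have := (mem_Ico.mp (val_inv_mul_mem_Ico hb ha hab)).2
  have := Nat.le_mul_of_pos_left (N.count a) (Nat.sub_pos_of_lt this)
  have := hmax b
  omega

lemma Admissible_s12.count_erase_self_le (h : Admissible_s12 N) (ha : a ≠ 0) :
    (N.erase a).count a ≤ absq p (scaledCount (N.erase a) a) := by
  rw [absq_scaledCount_erase_self ha, Multiset.count_erase_self]
  exact (Nat.sub_le _ _).trans (h a ha)

lemma Admissible_s12.erase_of_forall_count_le (h : Admissible_s12 N) (h0 : 0 ∉ N) (hx : x ∈ N)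
    (hmax : ∀ z, N.count z ≤ N.count x) : Admissible_s12 (N.erase x) := by
  have hx0 : x ≠ 0 := ne_of_mem_of_not_mem hx h0
  intro a ha
  rcases eq_or_ne x a with rfl | hxa
  · exact h.count_erase_self_le ha
  rw [Multiset.count_erase_of_ne hxa.symm]
  have hE := absq_scaledCount_erase ha hx0 hxa hx
  have hB := sub_one_add_mul_count_le_absq (N := N) ha hx0 hxa
  have hd := Nat.sub_pos_of_lt (mem_Ico.mp (val_inv_mul_mem_Ico ha hx0 hxa)).2
  have hc := Multiset.one_le_count_iff_mem.mpr hx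
  generalize p - (a⁻¹ * x).val = d at hd hE hB
  have : d + N.count x ≤ d * N.count x + 1 := by nlinarith
  have := hmax a
  have := (Fact.out : p.Prime).two_le
  omega

lemma Admissible_s12.erase_of_sum_eq (h : Admissible_s12 N) (h0 : 0 ∉ N) (hx : x ∈ N)
    (hmax : ∀ z, N.count z ≤ N.count x) (hsum : N.sum = x) (hy : y ∈ N) (hyx : y ≠ x) :
    Admissible_s12 (N.erase y) := by
  have hx0 : x ≠ 0 := ne_of_mem_of_not_mem hx h0
  have hy0 : y ≠ 0 := ne_of_mem_of_not_mem hy h0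
  intro a ha
  rcases eq_or_ne y a with rfl | hya
  · exact h.count_erase_self_le ha
  rw [Multiset.count_erase_of_ne hya.symm]
  have hE := absq_scaledCount_erase ha hy0 hya hy
  have hey := mem_Ico.mp (val_inv_mul_mem_Ico ha hy0 hya)
  rcases eq_or_ne x a with rfl | hxa
  · have := count_add_le_absq_of_sum_eq ha h0 hsum (h x ha)
    omega
  have hex := mem_Ico.mp (val_inv_mul_mem_Ico ha hx0 hxa)
  have hne : (a⁻¹ * x).val ≠ (a⁻¹ * y).val := fun he =>
    hyx (mul_left_cancel₀ (inv_ne_zero ha) (ZMod.val_injective p he)).symm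
  have hB := sub_one_add_sum_le_absq (scaledCount N a)
    (insert_subset (val_inv_mul_mem_Ico ha hx0 hxa) (singleton_subset_iff.mpr (mem_Ico.mpr hey)))
  rw [sum_pair hne, scaledCount_val_inv_mul ha, scaledCount_val_inv_mul ha] at hB
  have := Nat.le_mul_of_pos_left (N.count x) (Nat.sub_pos_of_lt hex.2)
  have := Nat.le_mul_of_pos_right (p - (a⁻¹ * y).val) (Multiset.one_le_count_iff_mem.mpr hy)
  have := hmax a
  omega

lemma Admissible_s12.exists_erase (h : Admissible_s12 N) (h0 : 0 ∉ N) (hcard : 2 ≤ Multiset.card N) :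
    ∃ w ∈ N, N.sum ≠ w ∧ Admissible_s12 (N.erase w) := by
  obtain ⟨x, -, hmax⟩ := exists_max_image univ N.count univ_nonempty
  replace hmax : ∀ z, N.count z ≤ N.count x := fun z => hmax z (mem_univ z)
  have hx : x ∈ N := by
    obtain ⟨z, hz⟩ := Multiset.card_pos_iff_exists_mem.mp (by omega : 0 < Multiset.card N)
    exact Multiset.one_le_count_iff_mem.mp ((Multiset.one_le_count_iff_mem.mpr hz).trans (hmax z))
  have hx0 : x ≠ 0 := ne_of_mem_of_not_mem hx h0
  by_cases hsum : N.sum = x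
  swap
  · exact ⟨x, hx, hsum, h.erase_of_forall_count_le h0 hx hmax⟩
  -- if `N` consisted of copies of `x = N.sum`, the bound at `x` would force `card N ≤ 1`
  obtain ⟨y, hy, hyx⟩ : ∃ y ∈ N, y ≠ x := by
    by_contra! hall
    have hrep : N = Multiset.replicate (Multiset.card N) x := Multiset.eq_replicate_card.mpr hall
    have habsq : absq p (scaledCount N x) = p - 1 := by
      rw [absq_congr (r' := 0) fun j hj => by
        rw [scaledCount, hrep, Multiset.count_replicate, if_neg (mul_natCast_ne_self hx0 hj).symm,
          Pi.zero_apply]]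
      simp [absq]
    have := count_add_le_absq_of_sum_eq hx0 h0 hsum (h x hx0)
    rw [habsq, hrep, Multiset.count_replicate_self] at this
    omega
  exact ⟨y, hy, hsum ▸ hyx.symm, h.erase_of_sum_eq h0 hx hmax hsum hy hyx⟩

lemma Admissible_s12.exists_partialSumsNeZero (h : Admissible_s12 N) (h0 : 0 ∉ N) (hsum : N.sum ≠ 0) :
    ∃ l : List (ZMod p), (l : Multiset (ZMod p)) = N ∧ l.PartialSumsNeZero := by
  induction N using Multiset.strongInductionOn with
  | ih N ih =>
    rcases le_or_gt (Multiset.card N) 1 with hcard | hcard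
    · obtain ⟨l, rfl⟩ := Quot.exists_rep N
      refine ⟨l, rfl, fun j hj1 hj2 => ?_⟩
      obtain rfl : j = l.length := by simp at hcard; omega
      simpa using hsum
    obtain ⟨w, hw, hsw, hadm⟩ := h.exists_erase h0 hcard
    have hsum' : (N.erase w).sum + w = N.sum := by
      rw [add_comm, ← Multiset.sum_cons, Multiset.cons_erase hw]
    obtain ⟨l, hl, hgood⟩ := ih _ (Multiset.erase_lt.mpr hw) hadm
      (fun h => h0 (Multiset.mem_of_mem_erase h)) fun h => hsw (by rw [← hsum', h, zero_add])
    refine ⟨l ++ [w], ?_, hgood.append_singleton ?_⟩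
    · rw [← Multiset.coe_add, hl, Multiset.coe_singleton, ← Multiset.cons_zero, Multiset.add_cons,
        add_zero, Multiset.cons_erase hw]
    · rwa [← Multiset.sum_coe, hl, hsum']

theorem exists_partialSumsNeZero_iff (h0 : 0 ∉ N) :
    (∃ l : List (ZMod p), (l : Multiset (ZMod p)) = N ∧ l ≠ [] ∧ l.PartialSumsNeZero) ↔
      N.sum ≠ 0 ∧ Admissible_s12 N := by
  constructor
  · rintro ⟨l, rfl, hne, hl⟩
    exact ⟨by simpa using hl.sum_ne_zero hne, .of_partialSumsNeZero (by simpa using h0) hl⟩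
  · rintro ⟨hsum, h⟩
    obtain ⟨l, rfl, hl⟩ := h.exists_partialSumsNeZero h0 hsum
    exact ⟨l, rfl, by rintro rfl; simp at hsum, hl⟩

end Admissible_s12

lemma Multiset.exists_coe_eq_and_map_eq {α β : Type*} [DecidableEq α] (f : α → β) :
    ∀ (l : List β) (s : Multiset α), s.map f = l → ∃ δ : List α, (δ : Multiset α) = s ∧ δ.map f = l
  | [], s, h => ⟨[], (Multiset.map_eq_zero.mp h).symm, rfl⟩
  | b :: l, s, h => by
    obtain ⟨a, ha, rfl, hl⟩ := (Multiset.map_eq_cons f s l b).mpr (by simpa using h)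
    obtain ⟨δ, hδ, rfl⟩ := exists_coe_eq_and_map_eq f l _ hl
    exact ⟨a :: δ, by rw [← Multiset.cons_coe, hδ, Multiset.cons_erase ha], rfl⟩

section Compositions

variable {q : ℕ} {lam : Multiset ℕ}

lemma natCast_ne_zero_of_pos_of_lt {a : ℕ} (ha : 0 < a) (haq : a < q) : (a : ZMod q) ≠ 0 := by
  rw [Ne, ZMod.natCast_eq_zero_iff]
  exact Nat.not_dvd_of_pos_of_lt ha haq

def residues (q : ℕ) (lam : Multiset ℕ) : Multiset (ZMod q) :=
  (lam.map ((↑) : ℕ → ZMod q)).filter (· ≠ 0)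

lemma zero_notMem_residues (q : ℕ) (lam : Multiset ℕ) : 0 ∉ residues q lam := by
  simp [residues]

lemma residues_add_replicate_zero :
    residues q lam + Multiset.replicate ((lam.map ((↑) : ℕ → ZMod q)).count 0) 0 =
      lam.map ((↑) : ℕ → ZMod q) := by
  rw [← Multiset.filter_eq', residues]
  simpa using Multiset.filter_add_not (· ≠ 0) (lam.map ((↑) : ℕ → ZMod q))

lemma natCast_sum_eq_sum_residues : (lam.sum : ZMod q) = (residues q lam).sum := by
  rw [Nat.cast_multiset_sum, ← residues_add_replicate_zero, Multiset.sum_add,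
    Multiset.sum_replicate, smul_zero, add_zero]

lemma rres_eq_count_residues {j : ℕ} (hj : 0 < j) (hjq : j < q) :
    rres q lam j = (residues q lam).count (j : ZMod q) := by
  rw [rres, residues,
    Multiset.count_filter_of_pos (p := (· ≠ 0)) (natCast_ne_zero_of_pos_of_lt hj hjq),
    Multiset.count_map]
  congr 1
  refine Multiset.filter_congr fun i _ => ?_
  rw [ZMod.natCast_eq_natCast_iff', Nat.mod_eq_of_lt hjq, eq_comm]
  refine ⟨And.right, fun h => ⟨Nat.pos_of_ne_zero ?_, h⟩⟩
  rintro rfl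
  simp at h
  omega

lemma cnum_ne_zero_iff : cnum q lam ≠ 0 ↔ ∃ δ : List ℕ, (δ : Multiset ℕ) = lam ∧ QCum q δ := by
  rw [cnum, Nat.card_ne_zero, nonempty_subtype, and_iff_left_iff_imp]
  intro _
  refine Set.Finite.to_subtype ((lam.toList.permutations.toFinset.finite_toSet).subset ?_)
  intro δ hδ
  simp [List.mem_permutations, ← Multiset.coe_eq_coe, hδ.1]

lemma qcum_iff_partialSumsNeZero (δ : List ℕ) :
    QCum q δ ↔ δ ≠ [] ∧ (δ.map ((↑) : ℕ → ZMod q)).PartialSumsNeZero := by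
  have hcast : ∀ j, ((δ.map ((↑) : ℕ → ZMod q)).take j).sum = 0 ↔ q ∣ (δ.take j).sum := fun j => by
    rw [← List.map_take, ← Nat.cast_list_sum, ZMod.natCast_eq_zero_iff]
  simp only [QCum, List.PartialSumsNeZero, List.length_map, Ne, hcast]
  constructor
  · rintro ⟨hsum, h⟩
    exact ⟨by rintro rfl; simp at hsum, h⟩
  · rintro ⟨hne, h⟩
    exact ⟨by simpa using h δ.length (List.length_pos_iff.mpr hne) le_rfl, h⟩

lemma exists_qcum_iff : (∃ δ : List ℕ, (δ : Multiset ℕ) = lam ∧ QCum q δ) ↔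
    ∃ l : List (ZMod q), (l : Multiset (ZMod q)) = residues q lam ∧ l ≠ [] ∧
      l.PartialSumsNeZero := by
  simp only [qcum_iff_partialSumsNeZero]
  constructor
  · rintro ⟨δ, rfl, hne, hδ⟩
    have hsum : (residues q δ).sum ≠ 0 := by
      rw [← natCast_sum_eq_sum_residues, Multiset.sum_coe, Nat.cast_list_sum]
      exact hδ.sum_ne_zero (by simpa using hne)
    have hres : (((δ.map (↑)).filter (· ≠ 0) : List (ZMod q)) : Multiset (ZMod q)) =
        residues q δ := by
      simp [residues]
    refine ⟨_, hres, fun h0 => hsum ?_, hδ.filter_ne_zero⟩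
    rw [← hres, h0, Multiset.coe_nil, Multiset.sum_zero]
  · rintro ⟨_ | ⟨x, t⟩, hl, hne, h⟩
    · exact absurd rfl hne
    set k := (lam.map ((↑) : ℕ → ZMod q)).count 0
    have hmap : lam.map ((↑) : ℕ → ZMod q) = ↑(x :: (List.replicate k 0 ++ t)) := by
      rw [← residues_add_replicate_zero, ← hl, ← Multiset.cons_coe, ← Multiset.cons_coe,
        ← Multiset.coe_add, ← Multiset.coe_replicate, Multiset.cons_add, add_comm]
    obtain ⟨δ, rfl, hδ⟩ := Multiset.exists_coe_eq_and_map_eq _ _ lam hmap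
    exact ⟨δ, rfl, by rintro rfl; simp at hδ, hδ ▸ h.cons_replicate_zero_append k⟩

end Compositions

section Translation

variable {p : ℕ} [Fact p.Prime] {lam : Multiset ℕ}

lemma mul_mod_eq_one_iff {a b : ℕ} (ha : (a : ZMod p) ≠ 0) :
    a * b % p = 1 ↔ (b : ZMod p) = (a : ZMod p)⁻¹ := by
  rw [← ZMod.val_natCast, ZMod.val_eq_one (Fact.out : p.Prime).one_lt, Nat.cast_mul, mul_comm,
    mul_eq_one_iff_eq_inv₀ ha]

lemma count_residues_eq_rres {z : ZMod p} (hz : z ≠ 0) :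
    (residues p lam).count z = rres p lam z.val := by
  rw [rres_eq_count_residues (Nat.pos_of_ne_zero ((ZMod.val_ne_zero z).mpr hz)) (ZMod.val_lt z),
    ZMod.natCast_zmod_val]

lemma scaledCount_residues_eq_rres {a b i j : ℕ} (ha : (a : ZMod p) ≠ 0)
    (hb : (b : ZMod p) = (a : ZMod p)⁻¹) (hi : 0 < i) (hip : i < p) (hij : j % p = b * i % p) :
    scaledCount (residues p lam) a j = rres p lam i := by
  rw [← ZMod.natCast_eq_natCast_iff', Nat.cast_mul, hb] at hij
  rw [scaledCount, hij, mul_inv_cancel_left₀ ha, rres_eq_count_residues hi hip]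

lemma absq_eq_absq_scaledCount_residues {a b : ℕ} {r' : ℕ → ℕ} (ha : (a : ZMod p) ≠ 0)
    (hb : (b : ZMod p) = (a : ZMod p)⁻¹)
    (hr' : ∀ i j, 1 ≤ i → i ≤ p - 1 → 1 ≤ j → j ≤ p - 1 → j % p = b * i % p → r' j = rres p lam i) :
    absq p r' = absq p (scaledCount (residues p lam) a) := by
  refine absq_congr fun j hj => ?_
  obtain ⟨hj2, hjp⟩ := mem_Ico.mp hj
  set i := ((a : ZMod p) * j).val
  have hi : 0 < i := Nat.pos_of_ne_zero ((ZMod.val_ne_zero _).mpr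
    (mul_ne_zero ha (natCast_ne_zero_of_pos_of_lt (by omega) hjp)))
  have hip : i < p := ZMod.val_lt _
  have hij : j % p = b * i % p := by
    rw [← ZMod.natCast_eq_natCast_iff', Nat.cast_mul, ZMod.natCast_zmod_val, hb,
      inv_mul_cancel_left₀ ha]
  rw [hr' i j hi (by omega) (by omega) (by omega) hij,
    scaledCount_residues_eq_rres ha hb hi hip hij]

lemma forall_count_le_of_rres_eq_maxr {a : ℕ} (ha : 0 < a) (hap : a < p)
    (hmax : rres p lam a = maxr p (rres p lam)) :
    ∀ z, (residues p lam).count z ≤ (residues p lam).count (a : ZMod p) := by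
  intro z
  rcases eq_or_ne z 0 with rfl | hz
  · simp [Multiset.count_eq_zero.mpr (zero_notMem_residues p lam)]
  rw [count_residues_eq_rres hz, ← rres_eq_count_residues ha hap, hmax]
  exact le_sup (mem_Ico.mpr ⟨Nat.pos_of_ne_zero ((ZMod.val_ne_zero z).mpr hz), ZMod.val_lt z⟩)

lemma admissible_residues_iff :
    Admissible_s12 (residues p lam) ↔
      ∃ a b : ℕ, ∃ r' : ℕ → ℕ,
        1 ≤ a ∧ a ≤ p - 1 ∧ rres p lam a = maxr p (rres p lam) ∧
        1 ≤ b ∧ b ≤ p - 1 ∧ a * b % p = 1 ∧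
        (∀ i j, 1 ≤ i → i ≤ p - 1 → 1 ≤ j → j ≤ p - 1 →
          j % p = b * i % p → r' j = rres p lam i) ∧
        maxr p (rres p lam) ≤ absq p r' := by
  have hp := (Fact.out : p.Prime).one_lt
  constructor
  · intro h
    obtain ⟨a, ha, hsup⟩ := exists_mem_eq_sup (Ico 1 p) ⟨1, mem_Ico.mpr ⟨le_rfl, hp⟩⟩ (rres p lam)
    obtain ⟨ha1, hap⟩ := mem_Ico.mp ha
    have hA := natCast_ne_zero_of_pos_of_lt ha1 hap
    have hb0 : ((a : ZMod p)⁻¹).val ≠ 0 := (ZMod.val_ne_zero _).mpr (inv_ne_zero hA)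
    have hb : (((a : ZMod p)⁻¹).val : ZMod p) = (a : ZMod p)⁻¹ := ZMod.natCast_zmod_val _
    refine ⟨a, _, scaledCount (residues p lam) a, ha1, by omega, hsup.symm, by omega,
      by have := ZMod.val_lt (a : ZMod p)⁻¹; omega, (mul_mod_eq_one_iff hA).mpr hb,
      fun i j hi _ _ _ hij => scaledCount_residues_eq_rres hA hb hi (by omega) hij, ?_⟩
    rw [maxr, hsup, rres_eq_count_residues ha1 hap]
    exact h _ hA
  · rintro ⟨a, b, r', ha1, hap, hmax, -, -, hab, hr', hle⟩
    have hA := natCast_ne_zero_of_pos_of_lt ha1 (by omega : a < p)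
    have hb := (mul_mod_eq_one_iff hA).mp hab
    refine admissible_of_count_le_of_forall_count_le hA
      (forall_count_le_of_rres_eq_maxr ha1 (by omega) hmax) ?_
    rw [← rres_eq_count_residues ha1 (by omega), hmax,
      ← absq_eq_absq_scaledCount_residues hA hb hr']
    exact hle

end Translation

theorem stmt12_general (p : ℕ) (hp : p.Prime) (lam : Multiset ℕ) :
    cnum p lam ≠ 0 ↔
      (¬ p ∣ lam.sum ∧
        ∃ a b : ℕ, ∃ r' : ℕ → ℕ,
          1 ≤ a ∧ a ≤ p - 1 ∧ rres p lam a = maxr p (rres p lam) ∧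
          1 ≤ b ∧ b ≤ p - 1 ∧ a * b % p = 1 ∧
          (∀ i j, 1 ≤ i → i ≤ p - 1 → 1 ≤ j → j ≤ p - 1 →
            j % p = b * i % p → r' j = rres p lam i) ∧
          maxr p (rres p lam) ≤ absq p r') := by
  have := Fact.mk hp
  rw [cnum_ne_zero_iff, exists_qcum_iff, exists_partialSumsNeZero_iff (zero_notMem_residues p lam),
    ← admissible_residues_iff, ← natCast_sum_eq_sum_residues, Ne, ZMod.natCast_eq_zero_iff]

/-- Theorem 1: for a prime `p` and a partition `λ`, `c^{(p)}_λ ≠ 0` iff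
`p ∤ |λ|` and, for some `a` with `r_a = max r(λ)`, one has
`max r(λ) ≤ |ᵇr(λ)|_p` where `ab ≡ 1 (mod p)`. -/
theorem stmt12 (p : ℕ) (hp : p.Prime) (lam : Multiset ℕ) (hlam : ∀ x ∈ lam, 0 < x) :
    cnum p lam ≠ 0 ↔
      (¬ p ∣ lam.sum ∧
        ∃ a b : ℕ, ∃ r' : ℕ → ℕ,
          1 ≤ a ∧ a ≤ p - 1 ∧ rres p lam a = maxr p (rres p lam) ∧
          1 ≤ b ∧ b ≤ p - 1 ∧ a * b % p = 1 ∧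
          (∀ i j, 1 ≤ i → i ≤ p - 1 → 1 ≤ j → j ≤ p - 1 →
            j % p = b * i % p → r' j = rres p lam i) ∧
          maxr p (rres p lam) ≤ absq p r') :=
  stmt12_general p hp lam
end

section
/- Let p be a prime number and λ a partition with r(λ) = (r₁,…,r_{p−1}). If p ∤ |λ| and there exist two distinct indices a ≠ c with 1 ≤ a, c ≤ p−1 such that r_a = r_c = max r(λ), then c^{(p)}_λ ≠ 0. -/
open Finset

/-!
Parts divisible by `p` are placed last: they cannot make a partial sum divisible by `p`.
The other parts, read as nonzero weights in `ZMod p`, are arranged from the back. As long as at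
least two remain, remove one whose weight differs from the current total, so that the remaining
total stays nonzero, taking it from a class filling more than half of what remains whenever such
a class exists. This keeps every class at most about half of the remaining parts. Initially this
holds because the two classes `a` and `c` both have the maximal size, so each has at most half
of the parts.
-/

namespace Multiset

theorem count_add_count_le_card {α : Type*} [DecidableEq α] {a b : α} (hab : a ≠ b) (s : Multiset α) :
    s.count a + s.count b ≤ card s := by
  have hdisj : s.filter (fun x => x = a ∧ x = b) = 0 :=
    filter_eq_nil.mpr fun x _ h => hab (h.1.symm.trans h.2)
  calc s.count a + s.count b
      = card (s.filter (· = a) + s.filter (· = b)) := by simp [filter_eq']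
    _ = card (s.filter fun x => x = a ∨ x = b) := by rw [filter_add_filter, hdisj, add_zero]
    _ ≤ card s := card_le_card (filter_le _ s)

variable {G : Type*} [AddCommGroup G] [DecidableEq G]

/-- Invariant of the backward greedy construction: a class may exceed half of `S` by two, but
only by one if it is the class of the total, since then the next removed element must avoid it. -/
def WeightBalanced (S : Multiset G) : Prop :=
  0 ∉ S ∧ S.sum ≠ 0 ∧ ∀ g, 2 * S.count g ≤ card S + if g = S.sum then 1 else 2

theorem WeightBalanced.of_cons {g : G} {T : Multiset G} (h : WeightBalanced (g ::ₘ T))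
    (hg : g ≠ (g ::ₘ T).sum)
    (hheavy : ∀ k ≠ (g ::ₘ T).sum, card T + 1 < 2 * (g ::ₘ T).count k → g = k) :
    WeightBalanced T := by
  obtain ⟨h0, -, hcount⟩ := h
  rw [mem_cons, not_or] at h0
  rw [sum_cons] at hg hheavy hcount
  have hsum : T.sum ≠ g + T.sum := fun h => h0.1 (by simpa using h : g = 0).symm
  refine ⟨h0.2, fun h => hg (by rw [h, add_zero]), fun k => ?_⟩
  have hk := hcount k
  rw [card_cons, count_cons] at hk
  by_cases hkg : k = g
  · subst hkg
    simp only [if_true, if_neg hg] at hk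
    split_ifs <;> omega
  · rw [if_neg hkg] at hk
    by_cases hlight : 2 * T.count k ≤ card T + 1
    · split_ifs <;> omega
    · have hkσ : k = g + T.sum := by
        by_contra hne
        exact hkg (hheavy k hne (by rw [count_cons, if_neg hkg]; omega)).symm
      rw [if_pos hkσ] at hk
      rw [if_neg (hkσ ▸ hsum).symm]
      omega

theorem WeightBalanced.of_two_mul_count_le {S : Multiset G} (h0 : 0 ∉ S) (hsum : S.sum ≠ 0)
    (hcount : ∀ g, 2 * S.count g ≤ card S) :
    WeightBalanced S :=
  ⟨h0, hsum, fun g => (hcount g).trans (by split_ifs <;> omega)⟩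

theorem WeightBalanced.exists_erase {S : Multiset G} (h : WeightBalanced S)
    (hcard : 2 ≤ card S) :
    ∃ g ∈ S, WeightBalanced (S.erase g) := by
  suffices ∃ g ∈ S, g ≠ S.sum ∧ ∀ k ≠ S.sum, card S < 2 * S.count k → g = k by
    obtain ⟨g, hgS, hg, hheavy⟩ := this
    refine ⟨g, hgS, ?_⟩
    rw [← cons_erase hgS] at h hg hheavy
    exact h.of_cons hg fun k hk hlt => hheavy k hk (by rwa [card_cons])
  by_cases hheavy : ∃ k ≠ S.sum, card S < 2 * S.count k
  · obtain ⟨k, hk, hlt⟩ := hheavy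
    refine ⟨k, count_pos.mp (by omega), hk, fun k' hk' hlt' => ?_⟩
    by_contra hne
    have := count_add_count_le_card hne S
    omega
  · push Not at hheavy
    have hlt : S.count S.sum < card S := by
      have := h.2.2 S.sum
      rw [if_pos rfl] at this
      omega
    obtain ⟨g, hgS, hg⟩ : ∃ g ∈ S, S.sum ≠ g := by
      by_contra! hall
      exact hlt.ne (count_eq_card.mpr hall)
    exact ⟨g, hgS, Ne.symm hg, fun k hk hlt => absurd hlt (not_lt.mpr (hheavy k hk))⟩

theorem WeightBalanced.exists_list_prefix_sum_ne_zero {α : Type*} (f : α → G) (M : Multiset α)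
    (h : WeightBalanced (M.map f)) :
    ∃ l : List α, (l : Multiset α) = M ∧
      ∀ j, 1 ≤ j → j ≤ l.length → ((l.take j).map f).sum ≠ 0 := by
  classical
  induction M using Multiset.strongInductionOn with
  | ih M ih =>
  have hsum : ∀ l : List α, (l : Multiset α) = M → (l.map f).sum ≠ 0 := by
    rintro l rfl
    simpa using h.2.1
  by_cases hcard : 2 ≤ card M
  · obtain ⟨g, hg, hbal⟩ := h.exists_erase (by rwa [card_map])
    obtain ⟨x, hxM, rfl⟩ := mem_map.mp hg
    have hM : M = x ::ₘ M.erase x := (cons_erase hxM).symm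
    have hmap : (M.map f).erase (f x) = (M.erase x).map f := by
      conv_lhs => rw [hM, map_cons, erase_cons_head]
    obtain ⟨l, hl, hpre⟩ := ih _ (erase_lt.mpr hxM) (hmap ▸ hbal)
    have hlx : ((l ++ [x] : List α) : Multiset α) = M := by
      rw [← coe_add, hl, coe_singleton, add_comm, singleton_add, ← hM]
    refine ⟨l ++ [x], hlx, fun j hj1 hj2 => ?_⟩
    rcases Nat.lt_or_ge l.length j with hlt | hle
    · rw [List.take_of_length_le (by simp; omega)]
      exact hsum _ hlx
    · rw [List.take_append_of_le_length hle]
      exact hpre j hj1 hle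
  · refine ⟨M.toList, coe_toList M, fun j hj1 hj2 => ?_⟩
    rw [List.take_of_length_le (by rw [length_toList] at hj2 ⊢; omega)]
    exact hsum _ (coe_toList M)

end Multiset

theorem QCum.append_of_forall_dvd {q : ℕ} {δ l : List ℕ} (hδ : QCum q δ)
    (hl : ∀ x ∈ l, q ∣ x) : QCum q (δ ++ l) := by
  have hdvd : ∀ i, q ∣ (l.take i).sum := fun i =>
    List.dvd_sum fun x hx => hl x (List.mem_of_mem_take hx)
  refine ⟨?_, fun j hj1 hj2 => ?_⟩
  · rw [List.sum_append, ← List.take_length (l := l), Nat.dvd_add_left (hdvd _)]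
    exact hδ.1
  · rw [List.take_append, List.sum_append, Nat.dvd_add_left (hdvd _)]
    rcases Nat.lt_or_ge δ.length j with hlt | hle
    · rw [List.take_of_length_le hlt.le]
      exact hδ.1
    · exact hδ.2 j hj1 hle

theorem cnum_ne_zero {q : ℕ} {lam : Multiset ℕ} {δ : List ℕ} (hδ : (δ : Multiset ℕ) = lam)
    (hq : QCum q δ) : cnum q lam ≠ 0 := by
  have hfin : {l : List ℕ | (l : Multiset ℕ) = lam ∧ QCum q l}.Finite :=
    (List.finite_toSet lam.toList.permutations).subset fun l hl =>
      List.mem_permutations.mpr <|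
        Multiset.coe_eq_coe.mp (hl.1.trans (Multiset.coe_toList lam).symm)
  exact Nat.card_ne_zero.mpr ⟨⟨⟨δ, hδ, hq⟩⟩, hfin.to_subtype⟩

section NotDvd

variable {p : ℕ} (lam : Multiset ℕ)

theorem count_map_natCast_filter_not_dvd {j : ℕ} (hj1 : 1 ≤ j) (hjp : j < p) :
    ((lam.filter (¬ p ∣ ·)).map (Nat.cast : ℕ → ZMod p)).count (j : ZMod p) = rres p lam j := by
  rw [Multiset.count_map, Multiset.filter_filter, rres]
  congr 1
  refine Multiset.filter_congr fun x _ => ?_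
  rw [ZMod.natCast_eq_natCast_iff', Nat.mod_eq_of_lt hjp, Nat.dvd_iff_mod_eq_zero]
  have := Nat.mod_le x p
  omega

theorem count_map_natCast_filter_not_dvd_le_maxr [NeZero p] (g : ZMod p) :
    ((lam.filter (¬ p ∣ ·)).map (Nat.cast : ℕ → ZMod p)).count g ≤ maxr p (rres p lam) := by
  rcases eq_or_ne g 0 with rfl | hg
  · rw [Multiset.count_eq_zero.mpr]
    · exact Nat.zero_le _
    · simp [ZMod.natCast_eq_zero_iff]
  · have hval : 1 ≤ g.val := Nat.one_le_iff_ne_zero.mpr ((ZMod.val_ne_zero g).mpr hg)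
    rw [← ZMod.natCast_zmod_val g, count_map_natCast_filter_not_dvd lam hval (ZMod.val_lt g)]
    exact Finset.le_sup (Finset.mem_Ico.mpr ⟨hval, ZMod.val_lt g⟩)

theorem two_mul_maxr_le_card_filter_not_dvd {a c : ℕ} (ha1 : 1 ≤ a) (ha : a < p) (hc1 : 1 ≤ c)
    (hc : c < p) (hac : a ≠ c) (hmaxa : rres p lam a = maxr p (rres p lam))
    (hmaxc : rres p lam c = maxr p (rres p lam)) :
    2 * maxr p (rres p lam) ≤ Multiset.card (lam.filter (¬ p ∣ ·)) := by
  have hne : (a : ZMod p) ≠ c := by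
    rwa [Ne, ZMod.natCast_eq_natCast_iff', Nat.mod_eq_of_lt ha, Nat.mod_eq_of_lt hc]
  have := Multiset.count_add_count_le_card hne ((lam.filter (¬ p ∣ ·)).map (Nat.cast : ℕ → ZMod p))
  rw [count_map_natCast_filter_not_dvd lam ha1 ha, count_map_natCast_filter_not_dvd lam hc1 hc,
    Multiset.card_map, hmaxa, hmaxc] at this
  omega

theorem exists_qcum_filter_not_dvd [NeZero p] (hsum : ¬ p ∣ (lam.filter (¬ p ∣ ·)).sum)
    (hmax : 2 * maxr p (rres p lam) ≤ Multiset.card (lam.filter (¬ p ∣ ·))) :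
    ∃ δ : List ℕ, (δ : Multiset ℕ) = lam.filter (¬ p ∣ ·) ∧ QCum p δ := by
  have hbal : ((lam.filter (¬ p ∣ ·)).map (Nat.cast : ℕ → ZMod p)).WeightBalanced := by
    refine .of_two_mul_count_le (by simp [ZMod.natCast_eq_zero_iff])
      (by rwa [← Nat.cast_multiset_sum, Ne, ZMod.natCast_eq_zero_iff]) fun g => ?_
    rw [Multiset.card_map]
    exact (Nat.mul_le_mul_left 2 (count_map_natCast_filter_not_dvd_le_maxr lam g)).trans hmax
  obtain ⟨δ, hδ, hpre⟩ := hbal.exists_list_prefix_sum_ne_zero _ _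
  refine ⟨δ, hδ, by rwa [← Multiset.sum_coe, hδ], fun j hj1 hj2 => ?_⟩
  rw [← ZMod.natCast_eq_zero_iff, Nat.cast_list_sum]
  exact hpre j hj1 hj2

end NotDvd

theorem stmt14_general (p : ℕ) (lam : Multiset ℕ)
    (hdvd : ¬ p ∣ lam.sum)
    (a c : ℕ) (ha1 : 1 ≤ a) (ha2 : a ≤ p - 1) (hc1 : 1 ≤ c) (hc2 : c ≤ p - 1)
    (hac : a ≠ c)
    (hmaxa : rres p lam a = maxr p (rres p lam))
    (hmaxc : rres p lam c = maxr p (rres p lam)) :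
    cnum p lam ≠ 0 := by
  have : NeZero p := ⟨by omega⟩
  have hsplit := Multiset.filter_add_not (p ∣ ·) lam
  have hB : ∀ x ∈ lam.filter (p ∣ ·), p ∣ x := fun x hx => (Multiset.mem_filter.mp hx).2
  have hAsum : ¬ p ∣ (lam.filter (¬ p ∣ ·)).sum := fun h => hdvd <| by
    rw [← hsplit, Multiset.sum_add]
    exact dvd_add (Multiset.dvd_sum hB) h
  obtain ⟨δ, hδ, hδq⟩ := exists_qcum_filter_not_dvd lam hAsum <|
    two_mul_maxr_le_card_filter_not_dvd lam ha1 (by omega) hc1 (by omega) hac hmaxa hmaxc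
  refine cnum_ne_zero (δ := δ ++ (lam.filter (p ∣ ·)).toList) ?_
    (hδq.append_of_forall_dvd fun x hx => hB x (Multiset.mem_toList.mp hx))
  rw [← Multiset.coe_add, hδ, Multiset.coe_toList, add_comm, hsplit]

/-- Remark: if `p ∤ |λ|` and `r(λ)` attains its maximum at two distinct
indices `a ≠ c` in `[1, p-1]`, then `c^{(p)}_λ ≠ 0`. -/
theorem stmt14 (p : ℕ) (hp : p.Prime) (lam : Multiset ℕ) (hlam : ∀ x ∈ lam, 0 < x)
    (hdvd : ¬ p ∣ lam.sum)
    (a c : ℕ) (ha1 : 1 ≤ a) (ha2 : a ≤ p - 1) (hc1 : 1 ≤ c) (hc2 : c ≤ p - 1)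
    (hac : a ≠ c)
    (hmaxa : rres p lam a = maxr p (rres p lam))
    (hmaxc : rres p lam c = maxr p (rres p lam)) :
    cnum p lam ≠ 0 :=
  stmt14_general p lam hdvd a c ha1 ha2 hc1 hc2 hac hmaxa hmaxc
end
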